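/- arXiv:0901.2291 — 7 statements merged into one kernel-verified Lean document; each statement's English description precedes it below -/
import Mathlib

section
/- Let B be an abelian group, δ an ordinal, and ⟨A_α : α ≤ δ⟩ a continuous increasing chain of subgroups of B with A_δ = B, such that A_0 is cotorsionfree and for every α < δ the quotient group A_{α+1}/A_α is cotorsionfree. Then B is cotorsionfree. -/
/-!
Call `T` cotorsionfree over `S` (subgroups of `G`) when, read inside `G`, `T ⧸ S` is torsion-free,
has no nonzero divisible element, and every homomorphism `ℤ_[p] → T` lands in `S`. Over `0` this
is just cotorsionfreeness: a torsion-free group with a nonzero divisible element contains `ℚ`, and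
a homomorphism `ℤ_[p] → G` with a nonzero kernel kills a unit `u`, hence has divisible image
because `ℤ_[p] = n ℤ_[p] + ℤ u` for every `n ≠ 0`.

The relation is transitive, which handles successor steps of the chain, and it passes to directed
unions: torsion-freeness of the quotients makes every stage pure, so divisibility witnesses descend
to the stage containing the divisible element, and by `ℤ_[p] = n ℤ_[p] + ℤ` the image of
`f : ℤ_[p] → T` is divisible modulo the stage containing `f 1`. Transfinite induction gives
`B` cotorsionfree over `A₀`, and transitivity with `A₀` cotorsionfree finishes.
-/

/-- An abelian group is cotorsionfree if it has no subgroup isomorphic to `ℚ`,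
to `ℤ/pℤ` for a prime `p`, or to the additive group of the `p`-adic integers. -/
def Cotorsionfree (G : Type*) [AddCommGroup G] : Prop :=
  (¬ ∃ H : AddSubgroup G, Nonempty (H ≃+ ℚ)) ∧
  (∀ p : ℕ, p.Prime → ¬ ∃ H : AddSubgroup G, Nonempty (H ≃+ ZMod p)) ∧
  (∀ (p : ℕ) [Fact p.Prime], ¬ ∃ H : AddSubgroup G, Nonempty (H ≃+ PadicInt p))

open Function

theorem exists_addMonoidHom_rat_apply_one {G : Type*} [AddCommGroup G] [IsAddTorsionFree G]
    {x : G} (hx : ∀ n : ℤ, n ≠ 0 → ∃ u, n • u = x) : ∃ f : ℚ →+ G, f 1 = x := by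
  choose u hu using hx
  have hden (q : ℚ) : (q.den : ℤ) ≠ 0 := by exact_mod_cast q.den_ne_zero
  let g (q : ℚ) : G := q.num • u q.den (hden q)
  have hg (q : ℚ) : (q.den : ℤ) • g q = q.num • x := by
    rw [smul_comm, hu]
  have hchar (a b : ℤ) (y : G) (hb : b ≠ 0) (hy : b • y = a • x) : g (a / b) = y := by
    have hab : ((a / b : ℚ).num * b : ℤ) = a * (a / b : ℚ).den := by
      have := Rat.num_div_den (a / b : ℚ)
      rw [div_eq_div_iff (by positivity) (by exact_mod_cast hb)] at this
      exact_mod_cast this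
    refine zsmul_right_injective (mul_ne_zero (hden (a / b)) hb) ?_
    linear_combination (norm := module) b • hg (a / b) - ((a / b : ℚ).den : ℤ) • hy + hab • x
  refine ⟨AddMonoidHom.mk' g fun q r => ?_, by simpa using hchar 1 1 x one_ne_zero rfl⟩
  have hsum : (↑(q.num * r.den + r.num * q.den) / ↑((q.den : ℤ) * r.den) : ℚ) = q + r := by
    conv_rhs => rw [← Rat.num_div_den q, ← Rat.num_div_den r]
    push_cast
    field_simp
  rw [← hsum]
  refine hchar _ _ _ (mul_ne_zero (hden q) (hden r)) ?_
  linear_combination (norm := module) (r.den : ℤ) • hg q + (q.den : ℤ) • hg r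

namespace PadicInt

variable {p : ℕ} [Fact p.Prime]

theorem exists_intCast_dvd_sub_mul {u : ℤ_[p]} (hu : IsUnit u) {n : ℤ} (hn : n ≠ 0)
    (z : ℤ_[p]) : ∃ a : ℤ, (n : ℤ_[p]) ∣ z - a * u := by
  obtain ⟨v, rfl⟩ := hu
  have hn' : (n : ℤ_[p]) ≠ 0 := Int.cast_ne_zero.mpr hn
  set k := (n : ℤ_[p]).valuation
  have hdvd : (p : ℤ_[p]) ^ k ∣ z * ↑v⁻¹ - (z * ↑v⁻¹).appr k :=
    Ideal.mem_span_singleton.mp (appr_spec k _)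
  have hassoc : Associated ((p : ℤ_[p]) ^ k) n :=
    ⟨unitCoeff hn', by rw [mul_comm, ← unitCoeff_spec hn']⟩
  refine ⟨(z * ↑v⁻¹).appr k, ?_⟩
  simpa [sub_mul, mul_assoc] using mul_dvd_mul_right (hassoc.symm.dvd.trans hdvd) (v : ℤ_[p])

theorem exists_addMonoidHom_eq_zsmul_add_zsmul {G : Type*} [AddCommGroup G] (f : ℤ_[p] →+ G)
    {u : ℤ_[p]} (hu : IsUnit u) {n : ℤ} (hn : n ≠ 0) (z : ℤ_[p]) :
    ∃ (w : ℤ_[p]) (a : ℤ), f z = n • f w + a • f u := by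
  obtain ⟨a, w, hw⟩ := exists_intCast_dvd_sub_mul hu hn z
  refine ⟨w, a, ?_⟩
  rw [← map_zsmul, ← map_zsmul, ← map_add, zsmul_eq_mul, zsmul_eq_mul, ← hw, sub_add_cancel]

end PadicInt

namespace Cotorsionfree

variable {G : Type*} [AddCommGroup G]

theorem isAddTorsionFree (h : Cotorsionfree G) : IsAddTorsionFree G := by
  refine isAddTorsionFree_iff_not_isOfFinAddOrder.mpr fun x hx hfin => ?_
  obtain ⟨q, hq, hdvd⟩ := Nat.exists_prime_and_dvd (mt AddMonoid.addOrderOf_eq_one_iff.mp hx)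
  set y := (addOrderOf x / q) • x
  have hy : addOrderOf y = q := addOrderOf_nsmul_addOrderOf_sub hfin.addOrderOf_pos.ne' hdvd
  exact h.2.1 q hq ⟨AddSubgroup.zmultiples y, ⟨(zmodAddEquivOfGenerator
    (g := ⟨y, AddSubgroup.mem_zmultiples y⟩) (fun ⟨_, k, hk⟩ => ⟨k, Subtype.ext hk⟩)
    ((Nat.card_zmultiples y).trans hy)).symm⟩⟩

theorem eq_zero_of_divisible (h : Cotorsionfree G) {x : G}
    (hx : ∀ n : ℤ, n ≠ 0 → ∃ u, n • u = x) : x = 0 := by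
  have := h.isAddTorsionFree
  by_contra hx0
  obtain ⟨f, hf1⟩ := exists_addMonoidHom_rat_apply_one hx
  have hinj : Injective f := by
    refine (injective_iff_map_eq_zero f).mpr fun q hq => ?_
    have hnum : q.num • x = 0 := by
      rw [← hf1, ← map_zsmul, zsmul_one, ← Rat.mul_den_eq_num, mul_comm, ← nsmul_eq_mul,
        map_nsmul, hq, smul_zero]
    exact Rat.num_eq_zero.mp ((smul_eq_zero.mp hnum).resolve_right hx0)
  exact h.1 ⟨f.range, ⟨(AddMonoidHom.ofInjective hinj).symm⟩⟩

theorem addMonoidHom_padicInt_eq_zero (h : Cotorsionfree G) (p : ℕ) [Fact p.Prime]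
    (f : ℤ_[p] →+ G) : f = 0 := by
  have := h.isAddTorsionFree
  by_cases hinj : Injective f
  · exact (h.2.2 p ⟨f.range, ⟨(AddMonoidHom.ofInjective hinj).symm⟩⟩).elim
  obtain ⟨y, hfy, hy⟩ : ∃ y, f y = 0 ∧ y ≠ 0 := by
    simpa [injective_iff_map_eq_zero] using hinj
  set c := PadicInt.unitCoeff hy
  have hc : f c = 0 := by
    have hpc : (p ^ y.valuation) • f c = 0 := by
      rw [← map_nsmul, nsmul_eq_mul, mul_comm, Nat.cast_pow, ← PadicInt.unitCoeff_spec hy, hfy]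
    exact (smul_eq_zero.mp hpc).resolve_left (pow_ne_zero _ (Fact.out : p.Prime).ne_zero)
  refine AddMonoidHom.ext fun z => h.eq_zero_of_divisible fun n hn => ?_
  obtain ⟨w, a, hw⟩ := PadicInt.exists_addMonoidHom_eq_zsmul_add_zsmul f c.isUnit hn z
  exact ⟨f w, by rw [hw, hc, smul_zero, add_zero]⟩

end Cotorsionfree

structure CotorsionfreeOver {G : Type*} [AddCommGroup G] (S T : AddSubgroup G) : Prop where
  mem_of_zsmul_mem : ∀ x ∈ T, ∀ n : ℤ, n ≠ 0 → n • x ∈ S → x ∈ S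
  mem_of_divisible : ∀ x ∈ T, (∀ n : ℤ, n ≠ 0 → ∃ u ∈ T, n • u - x ∈ S) → x ∈ S
  padicInt_mem : ∀ (p : ℕ) [Fact p.Prime] (f : ℤ_[p] →+ G), (∀ z, f z ∈ T) → ∀ z, f z ∈ S

namespace CotorsionfreeOver

variable {G : Type*} [AddCommGroup G]

theorem refl (S : AddSubgroup G) : CotorsionfreeOver S S :=
  ⟨fun _ hx _ _ _ => hx, fun _ hx _ => hx, fun _ _ _ hf => hf⟩

theorem trans {R S T : AddSubgroup G} (hRS : R ≤ S) (h₁ : CotorsionfreeOver R S)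
    (h₂ : CotorsionfreeOver S T) : CotorsionfreeOver R T where
  mem_of_zsmul_mem x hx n hn hnx :=
    h₁.mem_of_zsmul_mem x (h₂.mem_of_zsmul_mem x hx n hn (hRS hnx)) n hn hnx
  mem_of_divisible x hx hdiv := by
    have hxS : x ∈ S := h₂.mem_of_divisible x hx fun n hn =>
      (hdiv n hn).imp fun _ ⟨hu, hux⟩ => ⟨hu, hRS hux⟩
    refine h₁.mem_of_divisible x hxS fun n hn => ?_
    obtain ⟨u, hu, hux⟩ := hdiv n hn
    exact ⟨u, h₂.mem_of_zsmul_mem u hu n hn (by simpa using S.add_mem (hRS hux) hxS), hux⟩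
  padicInt_mem p _ f hf := h₁.padicInt_mem p f (h₂.padicInt_mem p f hf)

theorem of_iUnion {ι : Type*} [Preorder ι] [IsDirected ι (· ≤ ·)] {S : ι → AddSubgroup G}
    {T : AddSubgroup G} (hS : Monotone S) (hT : (T : Set G) = ⋃ i, (S i : Set G))
    (h : ∀ i j, i ≤ j → CotorsionfreeOver (S i) (S j)) (i : ι) : CotorsionfreeOver (S i) T := by
  have exists_mem (i : ι) {x : G} (hx : x ∈ T) : ∃ k, i ≤ k ∧ x ∈ S k := by
    rw [← SetLike.mem_coe, hT, Set.mem_iUnion] at hx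
    obtain ⟨j, hj⟩ := hx
    obtain ⟨k, hik, hjk⟩ := exists_ge_ge i j
    exact ⟨k, hik, hS hjk hj⟩
  have mem_of_zsmul_mem (i : ι) : ∀ x ∈ T, ∀ n : ℤ, n ≠ 0 → n • x ∈ S i → x ∈ S i := by
    intro x hx n hn hnx
    obtain ⟨k, hik, hxk⟩ := exists_mem i hx
    exact (h i k hik).mem_of_zsmul_mem x hxk n hn hnx
  have mem_of_divisible (i : ι) :
      ∀ x ∈ T, (∀ n : ℤ, n ≠ 0 → ∃ u ∈ T, n • u - x ∈ S i) → x ∈ S i := by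
    intro x hx hdiv
    obtain ⟨k, hik, hxk⟩ := exists_mem i hx
    refine (h i k hik).mem_of_divisible x hxk fun n hn => ?_
    obtain ⟨u, hu, hux⟩ := hdiv n hn
    exact ⟨u, mem_of_zsmul_mem k u hu n hn (by simpa using (S k).add_mem (hS hik hux) hxk), hux⟩
  refine ⟨mem_of_zsmul_mem i, mem_of_divisible i, fun p _ f hf => ?_⟩
  obtain ⟨k, hik, hf1⟩ := exists_mem i (hf 1)
  refine (h i k hik).padicInt_mem p f fun z => mem_of_divisible k _ (hf z) fun n hn => ?_
  obtain ⟨w, a, hw⟩ := PadicInt.exists_addMonoidHom_eq_zsmul_add_zsmul f isUnit_one hn z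
  refine ⟨f w, hf w, ?_⟩
  rw [hw, sub_add_cancel_left]
  exact neg_mem (zsmul_mem hf1 a)

theorem of_addMonoidHom {S T : AddSubgroup G} {H : Type*} [AddCommGroup H]
    (hH : Cotorsionfree H) (φ : T →+ H) (hφ : ∀ x : T, φ x = 0 ↔ (x : G) ∈ S) :
    CotorsionfreeOver S T where
  mem_of_zsmul_mem x hx n hn hnx := by
    have := hH.isAddTorsionFree
    have hφx : n • φ ⟨x, hx⟩ = 0 := by
      rw [← map_zsmul]
      exact (hφ _).mpr hnx
    exact (hφ ⟨x, hx⟩).mp ((smul_eq_zero.mp hφx).resolve_left hn)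
  mem_of_divisible x hx hdiv := by
    refine (hφ ⟨x, hx⟩).mp (hH.eq_zero_of_divisible fun n hn => ?_)
    obtain ⟨u, hu, hux⟩ := hdiv n hn
    refine ⟨φ ⟨u, hu⟩, ?_⟩
    rw [← sub_eq_zero, ← map_zsmul, ← map_sub]
    exact (hφ _).mpr hux
  padicInt_mem p _ f hf z := (hφ _).mp <|
    DFunLike.congr_fun (hH.addMonoidHom_padicInt_eq_zero p (φ.comp (f.codRestrict T hf))) z

theorem of_cotorsionfree {T : AddSubgroup G} (h : Cotorsionfree T) : CotorsionfreeOver ⊥ T :=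
  of_addMonoidHom h (AddMonoidHom.id T) fun x => by simp

theorem of_cotorsionfree_quotient {S T : AddSubgroup G}
    (h : Cotorsionfree (T ⧸ S.addSubgroupOf T)) : CotorsionfreeOver S T :=
  of_addMonoidHom h (QuotientAddGroup.mk' _) fun x => by
    rw [QuotientAddGroup.mk'_apply, QuotientAddGroup.eq_zero_iff, AddSubgroup.mem_addSubgroupOf]

theorem cotorsionfree (h : CotorsionfreeOver (⊥ : AddSubgroup G) ⊤) : Cotorsionfree G := by
  refine ⟨?_, fun q hq => ?_, fun p _ => ?_⟩
  · rintro ⟨H, ⟨e⟩⟩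
    have h1 := h.mem_of_divisible (e.symm 1 : G) trivial fun n hn =>
      ⟨e.symm (1 / n), trivial, by
        rw [← AddSubgroup.coe_zsmul, ← map_zsmul, zsmul_eq_mul, mul_one_div_cancel
          (Int.cast_ne_zero.mpr hn), sub_self, AddSubgroup.mem_bot]⟩
    simp at h1
  · rintro ⟨H, ⟨e⟩⟩
    have : Fact q.Prime := ⟨hq⟩
    have h1 := h.mem_of_zsmul_mem (e.symm 1 : G) trivial q (by exact_mod_cast hq.ne_zero) (by
      rw [← AddSubgroup.coe_zsmul, ← map_zsmul, natCast_zsmul, nsmul_one, ZMod.natCast_self,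
        map_zero, AddSubgroup.coe_zero, AddSubgroup.mem_bot])
    simp at h1
  · rintro ⟨H, ⟨e⟩⟩
    have h1 := h.padicInt_mem p (H.subtype.comp e.symm.toAddMonoidHom) (fun _ => trivial) 1
    simp at h1

theorem of_chain {δ : Ordinal} {A : Ordinal → AddSubgroup G}
    (hmono : ∀ α β : Ordinal, α ≤ β → β ≤ δ → A α ≤ A β)
    (hcont : ∀ ξ ≤ δ, Order.IsSuccLimit ξ → ((A ξ : Set G) = ⋃ ζ ∈ Set.Iio ξ, (A ζ : Set G)))
    (hsucc : ∀ α < δ, CotorsionfreeOver (A α) (A (α + 1))) :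
    ∀ β ≤ δ, ∀ ζ ≤ β, CotorsionfreeOver (A ζ) (A β) := by
  intro β
  induction β using Ordinal.limitRecOn with
  | zero =>
    intro _ ζ hζ
    rw [nonpos_iff_eq_zero.mp hζ]
    exact refl _
  | add_one γ ih =>
    intro hγ ζ hζ
    obtain hζ | rfl := hζ.lt_or_eq
    · have hγδ : γ < δ := Order.add_one_le_iff.mp hγ
      have hζγ : ζ ≤ γ := Order.lt_add_one_iff.mp hζ
      exact (ih hγδ.le ζ hζγ).trans (hmono ζ γ hζγ hγδ.le) (hsucc γ hγδ)
    · exact refl _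
  | limit β hβ ih =>
    intro hβδ ζ hζ
    obtain hζ | rfl := hζ.lt_or_eq
    · have hT : (A β : Set G) = ⋃ ρ : Set.Iio β, (A ρ : Set G) := by
        rw [hcont β hβδ hβ, Set.biUnion_eq_iUnion]
      exact of_iUnion (S := fun ρ : Set.Iio β => A ρ)
        (fun ρ ρ' h => hmono ρ ρ' h (ρ'.2.le.trans hβδ)) hT
        (fun ρ ρ' h => ih ρ' ρ'.2 (ρ'.2.le.trans hβδ) ρ h) ⟨ζ, hζ⟩
    · exact refl _

end CotorsionfreeOver

/-- if `⟨A_α : α ≤ δ⟩` is a continuous increasing chain of subgroups of `B`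
with `A_δ = B`, `A_0` cotorsionfree, and each successor quotient `A_{α+1}/A_α`
cotorsionfree, then `B` is cotorsionfree. -/
theorem statement1 (B : Type*) [AddCommGroup B] (δ : Ordinal)
    (A : Ordinal → AddSubgroup B)
    (hmono : ∀ α β : Ordinal, α ≤ β → β ≤ δ → A α ≤ A β)
    (hcont : ∀ ξ ≤ δ, Order.IsSuccLimit ξ → ((A ξ : Set B) = ⋃ ζ ∈ Set.Iio ξ, (A ζ : Set B)))
    (htop : A δ = ⊤)
    (h0 : Cotorsionfree (A 0))
    (hquot : ∀ α < δ, Cotorsionfree (A (α + 1) ⧸ (A α).addSubgroupOf (A (α + 1)))) :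
    Cotorsionfree B := by
  have hchain := CotorsionfreeOver.of_chain hmono hcont
    (fun α hα => .of_cotorsionfree_quotient (hquot α hα)) δ le_rfl 0 zero_le
  rw [htop] at hchain
  exact ((CotorsionfreeOver.of_cotorsionfree h0).trans bot_le hchain).cotorsionfree
end

section
/- Let B be an abelian group, δ an ordinal, and ⟨A_α : α ≤ δ⟩ a continuous increasing chain of subgroups of B with A_δ = B, such that A_0 is cotorsionfree and for every α < δ the quotient group A_{α+1}/A_α is cotorsionfree. Then for every α < δ, the quotient group B/A_α is cotorsionfree. -/
open Function

section DivisibleElements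

variable {G : Type*} [AddCommGroup G]

def IsDivisibleElement (x : G) : Prop := ∀ n : ℕ, n ≠ 0 → ∃ y : G, n • y = x

theorem exists_injective_rat_of_isDivisibleElement [IsAddTorsionFree G] {a : G} (ha : a ≠ 0)
    (hdiv : IsDivisibleElement a) : ∃ ψ : ℚ →+ G, Injective ψ := by
  choose! y hy using hdiv
  let φ : ℚ → G := fun q => q.num • y q.den
  have hφ (q : ℚ) : q.den • φ q = q.num • a := by
    rw [smul_comm, hy _ q.den_nz]
  have hφ' (q : ℚ) (k : ℕ) : (k * q.den) • φ q = (k * q.num : ℤ) • a := by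
    rw [mul_nsmul', hφ, ← natCast_zsmul, smul_smul]
  have hadd (q r : ℚ) : φ (q + r) = φ q + φ r := by
    refine nsmul_right_injective (n := q.den * r.den * (q + r).den) (by positivity) ?_
    calc (q.den * r.den * (q + r).den) • φ (q + r)
        = ((q.den * r.den : ℕ) * (q + r).num : ℤ) • a := hφ' _ _
      _ = ((r.den * (q + r).den : ℕ) * q.num : ℤ) • a
            + ((q.den * (q + r).den : ℕ) * r.num : ℤ) • a := by
        rw [← add_smul]
        congr 1
        push_cast
        linear_combination Rat.add_num_den' q r
      _ = (q.den * r.den * (q + r).den) • (φ q + φ r) := by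
        rw [← hφ', ← hφ', smul_add]
        ring_nf
  refine ⟨AddMonoidHom.mk' φ hadd, (injective_iff_map_eq_zero _).2 fun q hq => ?_⟩
  have : q.num • a = 0 := by rw [← hφ, show φ q = 0 from hq, smul_zero]
  simpa [ha] using this

theorem Cotorsionfree.isAddTorsionFree_s2 (h : Cotorsionfree G) : IsAddTorsionFree G := by
  refine IsAddTorsionFree.of_not_isOfFinAddOrder fun x hx hfin => ?_
  obtain ⟨q, hq, hqx⟩ := Nat.exists_prime_and_dvd (mt AddMonoid.addOrderOf_eq_one_iff.1 hx)
  set y := (addOrderOf x / q) • x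
  have hy : Nat.card (AddSubgroup.zmultiples y) = q := by
    rw [Nat.card_zmultiples, addOrderOf_nsmul_addOrderOf_sub hfin.addOrderOf_pos.ne' hqx]
  exact h.2.1 q hq ⟨_, ⟨((ZMod.ringEquivCongr hy).toAddEquiv.symm.trans
    (zmodAddCyclicAddEquiv inferInstance)).symm⟩⟩

theorem cotorsionfree_iff : Cotorsionfree G ↔ IsAddTorsionFree G ∧
    (∀ x : G, IsDivisibleElement x → x = 0) ∧
    ∀ (p : ℕ) [Fact p.Prime] (f : ℤ_[p] →+ G), ¬ Injective f := by
  constructor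
  · intro h
    have := h.isAddTorsionFree_s2
    refine ⟨this, fun x hx => by_contra fun hx0 => ?_, fun p _ f hf => ?_⟩
    · obtain ⟨ψ, hψ⟩ := exists_injective_rat_of_isDivisibleElement hx0 hx
      exact h.1 ⟨ψ.range, ⟨(AddMonoidHom.ofInjective hψ).symm⟩⟩
    · exact h.2.2 p ⟨f.range, ⟨(AddMonoidHom.ofInjective hf).symm⟩⟩
  · rintro ⟨htf, hred, hpadic⟩
    refine ⟨fun ⟨H, ⟨e⟩⟩ => ?_, fun p hp ⟨H, ⟨e⟩⟩ => ?_, fun p _ ⟨H, ⟨e⟩⟩ => ?_⟩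
    · have hdiv : IsDivisibleElement (e.symm 1 : G) := fun n hn =>
        ⟨e.symm (1 / n), by rw [← AddSubgroup.coe_nsmul, ← map_nsmul, nsmul_eq_mul,
          mul_one_div_cancel (by exact_mod_cast hn)]⟩
      simpa using hred _ hdiv
    · have : Fact p.Prime := ⟨hp⟩
      have hp1 : p • (e.symm 1 : G) = 0 := by
        rw [← AddSubgroup.coe_nsmul, ← map_nsmul, nsmul_eq_mul, mul_one, ZMod.natCast_self,
          map_zero, AddSubgroup.coe_zero]
      simpa using (nsmul_eq_zero_iff_right hp.ne_zero).1 hp1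
    · exact hpadic p (H.subtype.comp e.symm.toAddMonoidHom)
        (H.subtype_injective.comp e.symm.injective)

end DivisibleElements

namespace PadicInt

variable {p : ℕ} [hp : Fact p.Prime]

theorem exists_natCast_add_mul (w : ℤ_[p]) {N : ℕ} (hN : N ≠ 0) :
    ∃ (t : ℕ) (v : ℤ_[p]), w = t + N * v := by
  obtain ⟨k, s, hps, rfl⟩ := Nat.exists_eq_pow_mul_and_not_dvd hN p hp.out.ne_one
  obtain ⟨v, hv⟩ := Ideal.mem_span_singleton'.1 (appr_spec k w)
  obtain ⟨u, hu⟩ : IsUnit (s : ℤ_[p]) := by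
    rw [isUnit_iff, norm_natCast_eq_one_iff]
    exact (Nat.Prime.coprime_iff_not_dvd hp.out).2 hps
  refine ⟨w.appr k, ↑u⁻¹ * v, ?_⟩
  rw [Nat.cast_mul, Nat.cast_pow, ← hu]
  linear_combination -hv - (p : ℤ_[p]) ^ k * v * u.mul_inv

variable {G : Type*} [AddCommGroup G] [IsAddTorsionFree G]

/-- Write `c = u p^m` with `u` a unit. Approximating `u⁻¹ b` by an integer `t` modulo `p^m n`
gives `p^m b = t c + p^m n (c v)`; `f` kills `t c`, and `p^m` cancels in `G`. -/
theorem isDivisibleElement_map_of_map_eq_zero (f : ℤ_[p] →+ G) {c : ℤ_[p]} (hc : c ≠ 0)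
    (hfc : f c = 0) (b : ℤ_[p]) : IsDivisibleElement (f b) := by
  intro n hn
  set u := unitCoeff hc
  set m := c.valuation
  obtain ⟨t, v, htv⟩ := exists_natCast_add_mul (((u⁻¹ : ℤ_[p]ˣ) : ℤ_[p]) * b) (N := p ^ m * n)
    (mul_ne_zero (pow_ne_zero _ hp.out.ne_zero) hn)
  have key : (p ^ m : ℕ) • b = t • c + (p ^ m * n : ℕ) • (c * v) := by
    simp only [nsmul_eq_mul]
    push_cast at htv ⊢
    linear_combination c * htv - (((u⁻¹ : ℤ_[p]ˣ) : ℤ_[p]) * b) * unitCoeff_spec hc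
      - (p : ℤ_[p]) ^ m * b * u.mul_inv
  refine ⟨f (c * v), nsmul_right_injective (n := p ^ m) (pow_ne_zero _ hp.out.ne_zero) ?_⟩
  show p ^ m • n • f (c * v) = p ^ m • f b
  rw [← map_nsmul f (p ^ m) b, key, map_add, map_nsmul, hfc, smul_zero, zero_add, map_nsmul,
    mul_nsmul']

end PadicInt

theorem Ordinal.induction_above {β : Ordinal} {P : Ordinal → Prop} (le : ∀ ζ ≤ β, P ζ)
    (succ : ∀ τ, β ≤ τ → P τ → P (τ + 1))
    (limit : ∀ ζ, Order.IsSuccLimit ζ → β < ζ → (∀ η < ζ, P η) → P ζ) (ζ : Ordinal) : P ζ := by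
  induction ζ using WellFoundedLT.induction with
  | _ ζ ih =>
    rcases le_or_gt ζ β with hζβ | hβζ
    · exact le ζ hζβ
    rcases Ordinal.zero_or_succ_or_isSuccLimit ζ with rfl | ⟨τ, rfl⟩ | hlim
    · exact le 0 zero_le
    · rw [Order.succ_eq_add_one] at hβζ ih ⊢
      exact succ τ (Order.lt_add_one_iff.1 hβζ) (ih τ (lt_add_one τ))
    · exact limit ζ hlim hβζ ih

theorem QuotientAddGroup.map_id_apply_eq_zero_iff {G : Type*} [AddGroup G]
    {H K : AddSubgroup G} [H.Normal] [K.Normal] (h : H ≤ K) (y : G ⧸ H) :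
    QuotientAddGroup.map H K (AddMonoidHom.id G) h y = 0 ↔
      y ∈ K.map (QuotientAddGroup.mk' H) := by
  have hker := QuotientAddGroup.ker_map H K (AddMonoidHom.id G) h
  simp only [AddSubgroup.comap_id] at hker
  rw [← AddMonoidHom.mem_ker, hker]

structure IsCotorsionfreeChain {B : Type*} [AddCommGroup B] (δ : Ordinal)
    (A : Ordinal → AddSubgroup B) : Prop where
  mono : ∀ α β : Ordinal, α ≤ β → β ≤ δ → A α ≤ A β
  cont : ∀ ξ ≤ δ, Order.IsSuccLimit ξ → ((A ξ : Set B) = ⋃ ζ ∈ Set.Iio ξ, (A ζ : Set B))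
  top : A δ = ⊤
  quot : ∀ α < δ, Cotorsionfree (A (α + 1) ⧸ (A α).addSubgroupOf (A (α + 1)))

namespace IsCotorsionfreeChain

open QuotientAddGroup

variable {B : Type*} [AddCommGroup B] {δ : Ordinal} {A : Ordinal → AddSubgroup B}

theorem exists_lt_mem_of_isSuccLimit (hA : IsCotorsionfreeChain δ A) {ζ : Ordinal} (hζ : ζ ≤ δ)
    (hlim : Order.IsSuccLimit ζ) {b : B} (hb : b ∈ A ζ) : ∃ η < ζ, b ∈ A η := by
  simpa using (hA.cont ζ hζ hlim).subset hb

theorem exists_mem_succ_not_mem (hA : IsCotorsionfreeChain δ A) {β : Ordinal} (hβ : β ≤ δ)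
    {b : B} (hb : b ∉ A β) : ∃ τ, β ≤ τ ∧ τ < δ ∧ b ∈ A (τ + 1) ∧ b ∉ A τ := by
  suffices ∀ ζ ≤ δ, b ∈ A ζ → ∃ τ, β ≤ τ ∧ τ < ζ ∧ b ∈ A (τ + 1) ∧ b ∉ A τ from
    this δ le_rfl (hA.top ▸ AddSubgroup.mem_top b)
  refine Ordinal.induction_above (β := β)
    (fun ζ hζβ _ hbζ => (hb (hA.mono ζ β hζβ hβ hbζ)).elim) ?_ ?_
  · intro τ hβτ ih hτ hbτ
    by_cases hbτ' : b ∈ A τ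
    · obtain ⟨σ, hβσ, hστ, hσ⟩ := ih (le_self_add.trans hτ) hbτ'
      exact ⟨σ, hβσ, hστ.trans (lt_add_one τ), hσ⟩
    · exact ⟨τ, hβτ, lt_add_one τ, hbτ, hbτ'⟩
  · intro ζ hlim _ ih hζ hbζ
    obtain ⟨η, hηζ, hbη⟩ := hA.exists_lt_mem_of_isSuccLimit hζ hlim hbζ
    obtain ⟨σ, hβσ, hση, hσ⟩ := ih η hηζ (hηζ.le.trans hζ) hbη
    exact ⟨σ, hβσ, hση.trans hηζ, hσ⟩

theorem mem_of_nsmul_mem (hA : IsCotorsionfreeChain δ A) {β : Ordinal} (hβ : β ≤ δ) {n : ℕ}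
    (hn : n ≠ 0) {b : B} (h : n • b ∈ A β) : b ∈ A β := by
  by_contra hb
  obtain ⟨τ, hβτ, hτ, hb1, hb0⟩ := hA.exists_mem_succ_not_mem hβ hb
  have := (hA.quot τ hτ).isAddTorsionFree_s2
  have hx : n • (QuotientAddGroup.mk ⟨b, hb1⟩ :
      A (τ + 1) ⧸ (A τ).addSubgroupOf (A (τ + 1))) = 0 := by
    rw [← mk_nsmul, eq_zero_iff, AddSubgroup.mem_addSubgroupOf]
    exact hA.mono β τ hβτ hτ.le h
  rw [nsmul_eq_zero_iff_right hn, eq_zero_iff, AddSubgroup.mem_addSubgroupOf] at hx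
  exact hb0 hx

theorem isAddTorsionFree_quotient (hA : IsCotorsionfreeChain δ A) {β : Ordinal} (hβ : β ≤ δ) :
    IsAddTorsionFree (B ⧸ A β) := by
  refine ⟨fun n hn x y hxy => ?_⟩
  induction x using QuotientAddGroup.induction_on
  induction y using QuotientAddGroup.induction_on
  simp only [← mk_nsmul, QuotientAddGroup.eq] at hxy ⊢
  rw [← smul_neg, ← smul_add] at hxy
  exact hA.mem_of_nsmul_mem hβ hn hxy

theorem eq_zero_of_isDivisibleElement (hA : IsCotorsionfreeChain δ A) {β : Ordinal}
    (hβ : β ≤ δ) {x : B ⧸ A β} (hx : IsDivisibleElement x) : x = 0 := by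
  induction x using QuotientAddGroup.induction_on with | H b => ?_
  rw [eq_zero_iff]
  by_contra hb
  obtain ⟨τ, hβτ, hτ, hb1, hb0⟩ := hA.exists_mem_succ_not_mem hβ hb
  have hτ1 : τ + 1 ≤ δ := Order.add_one_le_of_lt hτ
  have hβτ1 : A β ≤ A (τ + 1) := hA.mono β _ (hβτ.trans le_self_add) hτ1
  have hdiv : IsDivisibleElement (QuotientAddGroup.mk ⟨b, hb1⟩ :
      A (τ + 1) ⧸ (A τ).addSubgroupOf (A (τ + 1))) := by
    intro n hn
    obtain ⟨y, hy⟩ := hx n hn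
    induction y using QuotientAddGroup.induction_on with | H c => ?_
    rw [← mk_nsmul, QuotientAddGroup.eq] at hy
    have hc : c ∈ A (τ + 1) := hA.mem_of_nsmul_mem hτ1 hn <| by
      simpa using sub_mem hb1 (hβτ1 hy)
    refine ⟨QuotientAddGroup.mk ⟨c, hc⟩, ?_⟩
    rw [← mk_nsmul, QuotientAddGroup.eq, AddSubgroup.mem_addSubgroupOf]
    exact hA.mono β τ hβτ hτ.le hy
  have := (cotorsionfree_iff.1 (hA.quot τ hτ)).2.1 _ hdiv
  rw [eq_zero_iff, AddSubgroup.mem_addSubgroupOf] at this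
  exact hb0 this

variable {p : ℕ} [Fact p.Prime]

theorem forall_map_mem_of_map_mem (hA : IsCotorsionfreeChain δ A) {α ζ : Ordinal} (hαζ : α ≤ ζ)
    (hζ : ζ ≤ δ) (f : ℤ_[p] →+ B ⧸ A α) {c : ℤ_[p]} (hc : c ≠ 0)
    (hfc : f c ∈ (A ζ).map (mk' (A α))) (x : ℤ_[p]) : f x ∈ (A ζ).map (mk' (A α)) := by
  have hle := hA.mono α ζ hαζ hζ
  have := hA.isAddTorsionFree_quotient hζ
  rw [← map_id_apply_eq_zero_iff hle] at hfc ⊢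
  exact hA.eq_zero_of_isDivisibleElement hζ <|
    PadicInt.isDivisibleElement_map_of_map_eq_zero ((map _ _ (.id B) hle).comp f) hc hfc x

theorem not_injective_of_forall_mem_succ (hA : IsCotorsionfreeChain δ A) {τ : Ordinal}
    (hτ : τ < δ) (g : ℤ_[p] →+ B ⧸ A τ) (hg : ∀ x, g x ∈ (A (τ + 1)).map (mk' (A τ))) :
    ¬ Injective g := by
  intro hinj
  let ι : A (τ + 1) ⧸ (A τ).addSubgroupOf (A (τ + 1)) →+ B ⧸ A τ :=
    map _ _ (A (τ + 1)).subtype le_rfl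
  have hι : Injective ι := by
    refine (injective_iff_map_eq_zero ι).2 fun y hy => ?_
    induction y using QuotientAddGroup.induction_on with | H z => ?_
    rw [eq_zero_iff, AddSubgroup.mem_addSubgroupOf]
    exact (eq_zero_iff (z : B)).1 hy
  have hrange (x : ℤ_[p]) : g x ∈ ι.range := by
    obtain ⟨b, hb, hbx⟩ := hg x
    exact ⟨QuotientAddGroup.mk ⟨b, hb⟩, hbx⟩
  refine (cotorsionfree_iff.1 (hA.quot τ hτ)).2.2 p
    ((AddMonoidHom.ofInjective hι).symm.toAddMonoidHom.comp (g.codRestrict _ hrange)) ?_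
  exact (AddMonoidHom.ofInjective hι).symm.injective.comp fun x y hxy =>
    hinj (congrArg Subtype.val hxy)

theorem not_injective_padicInt (hA : IsCotorsionfreeChain δ A) {α : Ordinal} (hα : α ≤ δ)
    (f : ℤ_[p] →+ B ⧸ A α) : ¬ Injective f := by
  intro hf
  suffices ∀ ζ ≤ δ, ¬ ∀ x, f x ∈ (A ζ).map (mk' (A α)) from
    this δ le_rfl fun x => by
      obtain ⟨b, hb⟩ := mk'_surjective (A α) (f x)
      exact ⟨b, hA.top ▸ AddSubgroup.mem_top b, hb⟩
  refine Ordinal.induction_above (β := α) ?_ ?_ ?_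
  · intro ζ hζα _ hall
    obtain ⟨b, hb, hb1⟩ := hall 1
    have hf1 : f 1 = 0 := by
      rw [← hb1, mk'_apply, eq_zero_iff]
      exact hA.mono ζ α hζα hα hb
    exact one_ne_zero (hf (hf1.trans (map_zero f).symm))
  · intro τ hατ ih hτ hall
    have hτδ : τ < δ := Order.add_one_le_iff.1 hτ
    have hle := hA.mono α τ hατ hτδ.le
    by_cases hker : ∃ c ≠ 0, f c ∈ (A τ).map (mk' (A α))
    · obtain ⟨c, hc, hfc⟩ := hker
      exact ih hτδ.le (hA.forall_map_mem_of_map_mem hατ hτδ.le f hc hfc)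
    refine hA.not_injective_of_forall_mem_succ hτδ ((map _ _ (.id B) hle).comp f)
      (fun x => ?_) ?_
    · obtain ⟨b, hb, hbx⟩ := hall x
      exact ⟨b, hb, by rw [AddMonoidHom.comp_apply, ← hbx]; rfl⟩
    · refine (injective_iff_map_eq_zero _).2 fun c hc => by_contra fun hc0 => hker ?_
      exact ⟨c, hc0, (map_id_apply_eq_zero_iff hle _).1 hc⟩
  · intro ζ hlim hαζ ih hζ hall
    obtain ⟨b, hb, hb1⟩ := hall 1
    obtain ⟨η, hηζ, hbη⟩ := hA.exists_lt_mem_of_isSuccLimit hζ hlim hb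
    have hη' : max η α ≤ δ := (max_lt hηζ hαζ).le.trans hζ
    exact ih _ (max_lt hηζ hαζ) hη' (hA.forall_map_mem_of_map_mem (le_max_right η α) hη' f
      one_ne_zero ⟨b, hA.mono η _ (le_max_left η α) hη' hbη, hb1⟩)

end IsCotorsionfreeChain

theorem statement2_general (B : Type*) [AddCommGroup B] (δ : Ordinal)
    (A : Ordinal → AddSubgroup B)
    (hmono : ∀ α β : Ordinal, α ≤ β → β ≤ δ → A α ≤ A β)
    (hcont : ∀ ξ ≤ δ, Order.IsSuccLimit ξ → ((A ξ : Set B) = ⋃ ζ ∈ Set.Iio ξ, (A ζ : Set B)))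
    (htop : A δ = ⊤)
    (hquot : ∀ α < δ, Cotorsionfree (A (α + 1) ⧸ (A α).addSubgroupOf (A (α + 1)))) :
    ∀ α < δ, Cotorsionfree (B ⧸ A α) := by
  intro α hα
  have hA : IsCotorsionfreeChain δ A := ⟨hmono, hcont, htop, hquot⟩
  have := hA.isAddTorsionFree_quotient hα.le
  exact cotorsionfree_iff.2 ⟨this, fun _ => hA.eq_zero_of_isDivisibleElement hα.le,
    fun _ _ => hA.not_injective_padicInt hα.le⟩

/-- if `⟨A_α : α ≤ δ⟩` is a continuous increasing chain of subgroups of `B`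
with `A_δ = B`, `A_0` cotorsionfree, and each successor quotient `A_{α+1}/A_α`
cotorsionfree, then every quotient `B/A_α` (for `α < δ`) is cotorsionfree. -/
theorem statement2 (B : Type*) [AddCommGroup B] (δ : Ordinal)
    (A : Ordinal → AddSubgroup B)
    (hmono : ∀ α β : Ordinal, α ≤ β → β ≤ δ → A α ≤ A β)
    (hcont : ∀ ξ ≤ δ, Order.IsSuccLimit ξ → ((A ξ : Set B) = ⋃ ζ ∈ Set.Iio ξ, (A ζ : Set B)))
    (htop : A δ = ⊤)
    (h0 : Cotorsionfree (A 0))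
    (hquot : ∀ α < δ, Cotorsionfree (A (α + 1) ⧸ (A α).addSubgroupOf (A (α + 1)))) :
    ∀ α < δ, Cotorsionfree (B ⧸ A α) :=
  statement2_general B δ A hmono hcont htop hquot
end

section
/- There is no ordinal δ and no increasing chain ⟨A_α : α < δ⟩ of proper subgroups of the Baer-Specker group ℤ^ω such that ℤ^ω/A_α is cotorsionfree for every α < δ and ⋃_{α<δ} A_α = ℤ^ω. (The chain is not assumed continuous.) -/
/-!
Let `A ≤ ℤ^ω` have cotorsionfree quotient and contain every unit vector. For `c ∈ ℤ^ω` and a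
prime `q`, pick `u k ≡ 1 mod q ^ k` divisible by the `q`-free part of `k!`. Then
`π ↦ [(u k * (π mod q ^ k) * c k)ₖ]` is an additive map `ℤ_[q] → ℤ^ω / A` whose kernel is an
ideal, so it vanishes (no `ℤ/q`, no `ℤ_[q]` inside the quotient). Hence `[c] = [((1 - u k) c k)ₖ]`
is divisible by every power of `q`, and `[c] = 0` because a torsion-free group containing no
copy of `ℚ` has no nonzero element divisible by every integer. Applied to the telescoping series
of approximations of a point of the closure, the same argument shows that `A` is closed in the
product topology.

In a chain as in the statement either one member contains all unit vectors, and is then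
everything, or the members containing the unit vectors form a countable cofinal family of closed
subgroups covering `ℤ^ω`. By Baire one of them is open, so it contains every vector vanishing on
some finite set `I`, and a member above it and above the unit vectors indexed by `I` is everything.
-/

open Filter Finset

section Cotorsionfree

variable {H : Type*} [AddCommGroup H]

theorem Cotorsionfree.isAddTorsionFree_s3 (hH : Cotorsionfree H) : IsAddTorsionFree H := by
  refine IsAddTorsionFree.of_not_isOfFinAddOrder fun x hx hfin => ?_
  obtain ⟨p, hp, hpx⟩ := Nat.exists_prime_and_dvd (mt AddMonoid.addOrderOf_eq_one_iff.1 hx)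
  have hy : addOrderOf ((addOrderOf x / p) • x) = p := by
    rw [addOrderOf_nsmul_of_dvd (Nat.div_pos (Nat.le_of_dvd hfin.addOrderOf_pos hpx) hp.pos).ne'
      (Nat.div_dvd_of_dvd hpx), Nat.div_div_self hpx hfin.addOrderOf_pos.ne']
  refine hH.2.1 p hp ⟨AddSubgroup.zmultiples ((addOrderOf x / p) • x), ⟨?_⟩⟩
  exact (zmodAddCyclicAddEquiv inferInstance).symm.trans
    (ZMod.ringEquivCongr (by rw [Nat.card_zmultiples, hy])).toAddEquiv

/-- `r ↦ r.num • y r.den`, where `n • y n = x`, is well defined and additive because `H` has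
no torsion. -/
theorem exists_addSubgroup_addEquiv_rat [IsAddTorsionFree H] {x : H} (hx : x ≠ 0)
    (hdiv : ∀ n : ℕ, n ≠ 0 → ∃ y, n • y = x) : ∃ S : AddSubgroup H, Nonempty (S ≃+ ℚ) := by
  choose! y hy using hdiv
  set f : ℚ → H := fun r => r.num • y r.den
  have hf : ∀ (r : ℚ) (a : ℤ) (b : ℕ), r * b = a → (b : ℤ) • f r = a • x := by
    intro r a b hr
    have hcross : r.num * b = a * r.den := by
      have : (r.num : ℚ) * b = a * r.den := by rw [← hr, ← Rat.mul_den_eq_num]; ring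
      exact_mod_cast this
    apply zsmul_right_injective (Int.natCast_ne_zero.2 r.den_ne_zero)
    calc (r.den : ℤ) • (b : ℤ) • f r = (r.num * b) • (r.den • y r.den) := by
          simp only [f, smul_smul, ← natCast_zsmul]; ring_nf
      _ = (r.den : ℤ) • a • x := by rw [hy _ r.den_ne_zero, hcross, smul_smul, mul_comm]
  have hadd : ∀ r s, f (r + s) = f r + f s := by
    intro r s
    have hb : ((r.den * s.den : ℕ) : ℤ) ≠ 0 := by positivity
    have hsum : (r + s) * ((r.den * s.den : ℕ) : ℚ) =
        ((r.num * s.den + s.num * r.den : ℤ) : ℚ) := by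
      push_cast
      linear_combination (s.den : ℚ) * Rat.mul_den_eq_num r + (r.den : ℚ) * Rat.mul_den_eq_num s
    refine zsmul_right_injective hb ?_
    beta_reduce
    rw [hf _ _ _ hsum, Nat.cast_mul]
    linear_combination (norm := module) (-(s.den : ℤ)) • hf r r.num r.den (Rat.mul_den_eq_num r) -
      (r.den : ℤ) • hf s s.num s.den (Rat.mul_den_eq_num s)
  let F : ℚ →+ H := AddMonoidHom.mk' f hadd
  have hinj : Function.Injective F := by
    refine (injective_iff_map_eq_zero F).2 fun r hr => ?_
    have h := hf r r.num r.den (Rat.mul_den_eq_num r)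
    rw [show f r = 0 from hr, smul_zero, eq_comm, IsAddTorsionFree.zsmul_eq_zero_iff_left hx] at h
    exact Rat.num_eq_zero.1 h
  exact ⟨F.range, ⟨(AddMonoidHom.ofInjective hinj).symm⟩⟩

theorem exists_nsmul_eq_of_forall_prime_pow {x : H}
    (hx : ∀ p k : ℕ, p.Prime → ∃ y, p ^ k • y = x) (n : ℕ) (hn : n ≠ 0) : ∃ y, n • y = x := by
  induction n using Nat.recOnPrimeCoprime with
  | zero => exact absurd rfl hn
  | prime_pow p k hp => exact hx p k hp
  | coprime a b ha hb hab iha ihb =>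
    obtain ⟨y, hy⟩ := iha (by lia)
    obtain ⟨z, hz⟩ := ihb (by lia)
    obtain ⟨u, v, huv⟩ := Nat.isCoprime_iff_coprime.2 hab
    refine ⟨u • z + v • y, ?_⟩
    rw [← natCast_zsmul] at hy hz ⊢
    push_cast
    linear_combination (norm := module) (v * b) • hy + (u * a) • hz + huv • x

theorem Cotorsionfree.eq_zero_of_forall_nsmul (hH : Cotorsionfree H) {x : H}
    (hx : ∀ n : ℕ, n ≠ 0 → ∃ y, n • y = x) : x = 0 := by
  have := hH.isAddTorsionFree_s3
  by_contra h
  exact hH.1 (exists_addSubgroup_addEquiv_rat h hx)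

theorem Cotorsionfree.eq_zero_of_forall_prime_pow (hH : Cotorsionfree H) {x : H}
    (hx : ∀ p k : ℕ, p.Prime → ∃ y, p ^ k • y = x) : x = 0 :=
  hH.eq_zero_of_forall_nsmul (exists_nsmul_eq_of_forall_prime_pow hx)

section PadicInt

variable {p : ℕ} [Fact p.Prime]

theorem exists_nsmul_eq_of_coprime (φ : ℤ_[p] →+ H) {n : ℕ} (hn : p.Coprime n) (π : ℤ_[p]) :
    ∃ y, n • y = φ π := by
  obtain ⟨v, hv⟩ := isUnit_iff_exists_inv.1
    (PadicInt.isUnit_iff.2 (PadicInt.norm_natCast_eq_one_iff.2 hn))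
  exact ⟨φ (v * π), by rw [← map_nsmul, nsmul_eq_mul, ← mul_assoc, hv, one_mul]⟩

/-- A nonzero element of the kernel is a unit times `p ^ ε`, so an ideal kernel contains
`p ^ ε ℤ_[p]`; torsion-freeness then kills everything. -/
theorem Cotorsionfree.padicInt_hom_eq_zero (hH : Cotorsionfree H) (φ : ℤ_[p] →+ H)
    (hφ : ∀ κ σ, φ κ = 0 → φ (κ * σ) = 0) : φ = 0 := by
  have := hH.isAddTorsionFree_s3
  obtain ⟨κ, hκ0, hκ⟩ : ∃ κ ≠ 0, φ κ = 0 := by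
    by_contra! h
    have hinj : Function.Injective φ :=
      (injective_iff_map_eq_zero φ).2 fun κ hκ => by_contra fun h' => h κ h' hκ
    exact hH.2.2 p ⟨φ.range, ⟨(AddMonoidHom.ofInjective hinj).symm⟩⟩
  ext ρ
  set w := PadicInt.unitCoeff hκ0
  have hpow : p ^ κ.valuation • φ ρ = 0 := by
    rw [← map_nsmul, nsmul_eq_mul, ← hφ κ (↑w⁻¹ * ρ) hκ]
    congr 1
    nth_rewrite 2 [PadicInt.unitCoeff_spec hκ0]
    push_cast
    rw [mul_comm (w : ℤ_[p]), mul_assoc, Units.mul_inv_cancel_left]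
  exact (nsmul_eq_zero_iff_right (pow_ne_zero _ (Fact.out : p.Prime).ne_zero)).1 hpow

theorem exists_padicInt_hom (ψ : (ℕ → ℤ) →+ H)
    (hψ : ∀ t : ℕ → ℤ, (∀ k, (t k : ZMod (p ^ k)) = 0) → ψ t = 0) :
    ∃ φ : ℤ_[p] →+ H, ∀ π t, (∀ k, (t k : ZMod (p ^ k)) = PadicInt.toZModPow k π) →
      φ π = ψ t := by
  have hwd : ∀ π t s, (∀ k, (t k : ZMod (p ^ k)) = PadicInt.toZModPow k π) →
      (∀ k, (s k : ZMod (p ^ k)) = PadicInt.toZModPow k π) → ψ t = ψ s := by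
    intro π t s ht hs
    rw [← sub_eq_zero, ← map_sub]
    exact hψ _ fun k => by simp [hs k, ht k]
  let appr : ℤ_[p] → ℕ → ℤ := fun π k => π.appr k
  have happr : ∀ π k, ((appr π k : ℤ) : ZMod (p ^ k)) = PadicInt.toZModPow k π := fun _ _ => by
    rw [Int.cast_natCast]; rfl
  refine ⟨AddMonoidHom.mk' (fun π => ψ (appr π)) fun π σ => ?_,
    fun π t ht => hwd π _ _ (happr π) ht⟩
  rw [← map_add]
  exact hwd (π + σ) _ _ (happr _) fun k => by simp [happr]

end PadicInt

end Cotorsionfree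

namespace BaerSpecker

variable {Q : Type*} [AddCommGroup Q] (f : (ℕ → ℤ) →+ Q)

theorem map_eq_zero_of_eq_zero_off {s : Finset ℕ} (hf : ∀ k ∈ s, f (Pi.single k 1) = 0)
    {v : ℕ → ℤ} (hv : ∀ k ∉ s, v k = 0) : f v = 0 := by
  have hsum : v = ∑ k ∈ s, v k • Pi.single k 1 := by
    ext i
    by_cases hi : i ∈ s <;> simp [Finset.sum_apply, Pi.single_apply, hi, hv]
  rw [hsum, map_sum]
  exact Finset.sum_eq_zero fun k hk => by rw [map_zsmul, hf k hk, smul_zero]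

variable {f}

theorem map_eq_zero_of_eventually_eq_zero (hf : ∀ k, f (Pi.single k 1) = 0) {v : ℕ → ℤ}
    (hv : ∀ᶠ k in atTop, v k = 0) : f v = 0 := by
  obtain ⟨N, hN⟩ := eventually_atTop.1 hv
  exact map_eq_zero_of_eq_zero_off f (s := range N) (fun k _ => hf k)
    fun k hk => hN k (by simpa using hk)

theorem exists_nsmul_eq_of_eventually_dvd (hf : ∀ k, f (Pi.single k 1) = 0) {n : ℕ}
    {v : ℕ → ℤ} (hv : ∀ᶠ k in atTop, (n : ℤ) ∣ v k) : ∃ y, n • y = f v := by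
  refine ⟨f (fun k => v k / n), eq_of_sub_eq_zero ?_⟩
  rw [← map_nsmul, ← map_sub]
  refine map_eq_zero_of_eventually_eq_zero hf (hv.mono fun k hk => ?_)
  simp [Int.mul_ediv_cancel' hk]

theorem map_eq_zero_of_eventually_dvd (hQ : Cotorsionfree Q) (hf : ∀ k, f (Pi.single k 1) = 0)
    {v : ℕ → ℤ} (hv : ∀ n : ℕ, n ≠ 0 → ∀ᶠ k in atTop, (n : ℤ) ∣ v k) : f v = 0 :=
  hQ.eq_zero_of_forall_nsmul fun n hn => exists_nsmul_eq_of_eventually_dvd hf (hv n hn)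

/- `ordCompl[q] n` unfolds to the quotient `n / q ^ n.factorization q`; the `ℕ` ascriptions
below keep that division in `ℕ` instead of letting it elaborate in `ℤ`. -/
theorem exists_pow_dvd_sub_one_and_ordCompl_dvd {q : ℕ} (hq : q.Prime) :
    ∃ u : ℕ → ℤ, ∀ k, (q : ℤ) ^ k ∣ u k - 1 ∧ ((ordCompl[q] k.factorial : ℕ) : ℤ) ∣ u k := by
  have hcop : ∀ k, IsCoprime ((q : ℤ) ^ k) ((ordCompl[q] k.factorial : ℕ) : ℤ) := fun k => by
    rw [← Nat.cast_pow, Nat.isCoprime_iff_coprime]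
    exact (Nat.coprime_ordCompl hq k.factorial_ne_zero).pow_left k
  choose a b hab using hcop
  exact ⟨fun k => b k * (ordCompl[q] k.factorial : ℕ), fun k =>
    ⟨⟨-a k, by linear_combination hab k⟩, dvd_mul_left _ _⟩⟩

theorem map_mul_eq_zero_of_pow_dvd (hQ : Cotorsionfree Q) (hf : ∀ k, f (Pi.single k 1) = 0)
    {q : ℕ} {u : ℕ → ℤ} (hu : ∀ k, ((ordCompl[q] k.factorial : ℕ) : ℤ) ∣ u k)
    {t : ℕ → ℤ} (ht : ∀ k, (q : ℤ) ^ k ∣ t k) (c : ℕ → ℤ) : f (u * t * c) = 0 := by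
  refine map_eq_zero_of_eventually_dvd hQ hf fun n hn => ?_
  filter_upwards [eventually_ge_atTop n] with k hk
  have hpow : (q : ℤ) ^ n.factorization q ∣ t k :=
    (pow_dvd_pow _ ((n.factorization_lt q hn).le.trans hk)).trans (ht k)
  have hcompl : ((ordCompl[q] n : ℕ) : ℤ) ∣ u k :=
    (Int.natCast_dvd_natCast.2 (Nat.ordCompl_dvd_ordCompl_of_dvd
      (Nat.dvd_factorial (Nat.pos_of_ne_zero hn) hk) q)).trans (hu k)
  have hn : (n : ℤ) = (q : ℤ) ^ n.factorization q * ((ordCompl[q] n : ℕ) : ℤ) := by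
    exact_mod_cast (Nat.ordProj_mul_ordCompl_eq_self n q).symm
  rw [hn, mul_comm (q ^ _ : ℤ)]
  exact (mul_dvd_mul hcompl hpow).mul_right (c k)

theorem map_mul_eq_zero (hQ : Cotorsionfree Q) (hf : ∀ k, f (Pi.single k 1) = 0)
    {q : ℕ} [Fact q.Prime] {u : ℕ → ℤ} (hu : ∀ k, ((ordCompl[q] k.factorial : ℕ) : ℤ) ∣ u k)
    (c : ℕ → ℤ) : f (u * c) = 0 := by
  let ψ : (ℕ → ℤ) →+ Q := f.comp ((AddMonoidHom.mulRight c).comp (AddMonoidHom.mulLeft u))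
  obtain ⟨φ, hφ⟩ := exists_padicInt_hom ψ fun t ht =>
    map_mul_eq_zero_of_pow_dvd hQ hf hu (fun k => by
      exact_mod_cast (ZMod.intCast_zmod_eq_zero_iff_dvd (t k) (q ^ k)).1 (ht k)) c
  have hφ0 : φ = 0 := hQ.padicInt_hom_eq_zero φ fun κ σ hκ =>
    hQ.eq_zero_of_forall_prime_pow fun r β hr => by
      by_cases hrq : r = q
      · subst hrq
        obtain ⟨τ, hτ⟩ := Ideal.mem_span_singleton'.1 (PadicInt.appr_spec β σ)
        have hsplit : κ * σ = σ.appr β • κ + r ^ β • (κ * τ) := by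
          rw [nsmul_eq_mul, nsmul_eq_mul]
          push_cast
          linear_combination -κ * hτ
        refine ⟨φ (κ * τ), ?_⟩
        rw [hsplit, map_add, map_nsmul, hκ, smul_zero, zero_add, map_nsmul]
      · exact exists_nsmul_eq_of_coprime φ
          (((Nat.coprime_primes Fact.out hr).2 (Ne.symm hrq)).pow_right β) _
  have h1 := hφ 1 1 fun k => by simp
  simpa [hφ0, ψ] using h1.symm

theorem eq_zero_of_map_single_eq_zero (hQ : Cotorsionfree Q)
    (hf : ∀ k, f (Pi.single k 1) = 0) : f = 0 := by
  refine AddMonoidHom.ext fun c => hQ.eq_zero_of_forall_prime_pow fun q β hq => ?_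
  have := Fact.mk hq
  obtain ⟨u, hu⟩ := exists_pow_dvd_sub_one_and_ordCompl_dvd hq
  have hc : f c = f ((1 - u) * c) := by
    rw [sub_mul, one_mul, map_sub, map_mul_eq_zero hQ hf (fun k => (hu k).2) c, sub_zero]
  rw [hc]
  refine exists_nsmul_eq_of_eventually_dvd hf ?_
  filter_upwards [eventually_ge_atTop β] with k hk
  have hu1 : (q : ℤ) ^ k ∣ 1 - u k := by rw [← dvd_neg, neg_sub]; exact (hu k).1
  push_cast
  exact ((pow_dvd_pow _ hk).trans hu1).mul_right (c k)

theorem exists_mem_eqOn_of_mem_closure {s : Set (ℕ → ℤ)} {x : ℕ → ℤ} (hx : x ∈ closure s)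
    (L : ℕ) : ∃ a ∈ s, ∀ k < L, a k = x k := by
  have hopen : IsOpen ((Set.Iio L).pi fun k => ({x k} : Set ℤ)) :=
    isOpen_set_pi (Set.finite_Iio L) fun _ _ => isOpen_discrete _
  obtain ⟨a, hax, has⟩ := mem_closure_iff.1 hx _ hopen (by simp)
  exact ⟨a, has, by simpa using hax⟩

/-- `ζ ↦ ∑ₖ ζ k • b k`; each coordinate is a finite sum when `b k` vanishes below `k`. -/
def seriesHom (b : ℕ → ℕ → ℤ) : (ℕ → ℤ) →+ (ℕ → ℤ) where
  toFun ζ j := ∑ k ∈ range (j + 1), ζ k * b k j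
  map_zero' := by ext; simp
  map_add' _ _ := by ext; simp [add_mul, sum_add_distrib]

theorem seriesHom_single {b : ℕ → ℕ → ℤ} (hb : ∀ k j, j < k → b k j = 0) (k : ℕ) :
    seriesHom b (Pi.single k 1) = b k := by
  ext j
  by_cases hkj : k ≤ j
  · simp [seriesHom, Pi.single_apply, Nat.lt_succ_of_le hkj]
  · simp [seriesHom, Pi.single_apply, hb k j (not_le.1 hkj)]

theorem seriesHom_one_of_telescoping (a : ℕ → ℕ → ℤ) (j : ℕ) :
    seriesHom (fun k => a (k + 1) - a k) 1 j = a (j + 1) j - a 0 j := by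
  simp [seriesHom, sum_range_sub (fun k => a k j)]

theorem isClosed_of_cotorsionfree {A : AddSubgroup (ℕ → ℤ)}
    (hA : Cotorsionfree ((ℕ → ℤ) ⧸ A)) : IsClosed (A : Set (ℕ → ℤ)) := by
  refine isClosed_of_closure_subset fun x hx => ?_
  choose a ha hax using exists_mem_eqOn_of_mem_closure hx
  set b : ℕ → ℕ → ℤ := fun k => a (k + 1) - a k
  have hb : ∀ k j, j < k → b k j = 0 := fun k j hj => by
    simp [b, hax _ j hj, hax _ j (hj.trans (Nat.lt_succ_self k))]
  have hzero :=
    eq_zero_of_map_single_eq_zero hA (f := (QuotientAddGroup.mk' A).comp (seriesHom b))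
    fun k => by simpa [seriesHom_single hb] using A.sub_mem (ha (k + 1)) (ha k)
  have hsum : seriesHom b 1 = x - a 0 := by
    ext j
    rw [seriesHom_one_of_telescoping, hax _ j (Nat.lt_succ_self j), Pi.sub_apply]
  have hmem : x - a 0 ∈ A := by
    rw [← QuotientAddGroup.eq_zero_iff, ← hsum]
    exact DFunLike.congr_fun hzero 1
  simpa using A.add_mem hmem (ha 0)

theorem eq_top_of_single_mem {A : AddSubgroup (ℕ → ℤ)} (hA : Cotorsionfree ((ℕ → ℤ) ⧸ A))
    (h : ∀ k, Pi.single k 1 ∈ A) : A = ⊤ := by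
  have hzero := eq_zero_of_map_single_eq_zero hA (f := QuotientAddGroup.mk' A)
    fun k => (QuotientAddGroup.eq_zero_iff _).2 (h k)
  exact (AddSubgroup.eq_top_iff' A).2 fun x =>
    (QuotientAddGroup.eq_zero_iff x).1 (DFunLike.congr_fun hzero x)

theorem exists_finset_eq_top_of_isOpen {B : AddSubgroup (ℕ → ℤ)}
    (hB : IsOpen (B : Set (ℕ → ℤ))) : ∃ I : Finset ℕ, ∀ C : AddSubgroup (ℕ → ℤ), B ≤ C →
      (∀ k ∈ I, Pi.single k 1 ∈ C) → C = ⊤ := by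
  classical
  obtain ⟨I, U, hU, hIU⟩ := isOpen_pi_iff.1 hB 0 B.zero_mem
  refine ⟨I, fun C hBC hC => (AddSubgroup.eq_top_iff' C).2 fun x => ?_⟩
  set w : ℕ → ℤ := fun k => if k ∈ I then x k else 0
  have hw : w ∈ C := (QuotientAddGroup.eq_zero_iff w).1 <|
    map_eq_zero_of_eq_zero_off (QuotientAddGroup.mk' C) (s := I)
      (fun k hk => (QuotientAddGroup.eq_zero_iff _).2 (hC k hk)) fun k hk => if_neg hk
  have hxw : x - w ∈ B := hIU fun k hk => by simpa [w, Finset.mem_coe.1 hk] using (hU k hk).2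
  simpa using C.add_mem (hBC hxw) hw

end BaerSpecker

/-- the Baer-Specker group `ℤ^ω` is never the union of an increasing chain
(not assumed continuous) `⟨A_α : α < δ⟩` of proper subgroups with all quotients
`ℤ^ω/A_α` cotorsionfree. -/
theorem statement3 :
    ¬ ∃ (δ : Ordinal) (A : Ordinal → AddSubgroup (ℕ → ℤ)),
      (∀ α β : Ordinal, α ≤ β → β < δ → A α ≤ A β) ∧
      (∀ α < δ, A α ≠ ⊤) ∧
      (∀ α < δ, Cotorsionfree ((ℕ → ℤ) ⧸ A α)) ∧
      (⋃ α ∈ Set.Iio δ, (A α : Set (ℕ → ℤ))) = Set.univ := by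
  rintro ⟨δ, A, hmono, hproper, hA, hcover⟩
  have hmem : ∀ x, ∃ α < δ, x ∈ A α := fun x => by
    simpa using Set.eq_univ_iff_forall.1 hcover x
  choose β hβδ hβ using fun k => hmem (Pi.single k 1)
  by_cases hbounded : ∃ α < δ, ∀ k, β k ≤ α
  · obtain ⟨α, hα, hβα⟩ := hbounded
    exact hproper α hα (BaerSpecker.eq_top_of_single_mem (hA α hα)
      fun k => hmono _ _ (hβα k) hα (hβ k))
  push Not at hbounded
  have hcover' : ⋃ k, (A (β k) : Set (ℕ → ℤ)) = Set.univ := Set.eq_univ_of_forall fun x => by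
    obtain ⟨α, hα, hx⟩ := hmem x
    obtain ⟨k, hk⟩ := hbounded α hα
    exact Set.mem_iUnion.2 ⟨k, hmono α (β k) hk.le (hβδ k) hx⟩
  obtain ⟨n, hn⟩ := nonempty_interior_of_iUnion_of_closed
    (fun k => BaerSpecker.isClosed_of_cotorsionfree (hA _ (hβδ k))) hcover'
  obtain ⟨I, hI⟩ := BaerSpecker.exists_finset_eq_top_of_isOpen
    ((A (β n)).isOpen_of_mem_nhds (mem_interior_iff_mem_nhds.1 hn.some_mem))
  set γ := (insert n I).sup β
  have hγ : γ < δ := (Finset.sup_lt_iff (bot_le.trans_lt (hβδ 0))).2 fun k _ => hβδ k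
  exact hproper γ hγ (hI _ (hmono _ _ (le_sup (mem_insert_self n I)) hγ)
    fun k hk => hmono _ _ (le_sup (mem_insert_of_mem hk)) hγ (hβ k))
end

section
/- There is no ordinal δ and no increasing chain ⟨A_α : α < δ⟩ of proper subgroups of the Baer-Specker group ℤ^ω such that each A_α is a direct summand of ℤ^ω and ⋃_{α<δ} A_α = ℤ^ω. -/
/-!
A proper direct summand of `ℤ^ω` is annihilated by a nonzero homomorphism `g : ℤ^ω → ℤ`, namely
a coordinate of the projection onto a complement. Suppose a chain of such subgroups covers `ℤ^ω`.
If one member contains every unit vector `eₙ`, its `g` vanishes on all `eₙ`, which by Specker's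
theorem forces `g = 0`: split `f = u + v` with `2ⁿ ∣ uₙ` and `3ⁿ ∣ vₙ`; then `g u` is divisible by
every `2ᴺ`, and similarly for `v`. Otherwise the members containing `e₀, …, eₙ` are cofinal and
form an `ω`-chain `Bₙ` with functionals `gₙ`. Choosing indices `n₀ < n₁ < …` and unit vectors
`xₖ` with `g_{nₖ} xₖ ≠ 0` but `g_{nₖ} xⱼ = 0` for `j < k`, the sum `z = ∑ Mₖ xₖ` with weights
`Mₖ` growing fast enough has `g_{nₖ} z ≠ 0` for every `k`, so `z` lies in no `Bₙ`.
-/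

open Finset

namespace BaerSpecker

lemma summable_of_apply_eq_zero_of_lt {x : ℕ → ℕ → ℤ} (hx : ∀ k j, j < k → x k j = 0) :
    Summable x :=
  Pi.summable.2 fun j => summable_of_ne_finset_zero (s := range (j + 1)) fun k hk =>
    hx k j (by simpa using hk)

lemma hasSum_pi_single_diag (c : ℕ → ℤ) : HasSum (fun n => Pi.single n (c n)) c :=
  Pi.hasSum.2 fun j => by
    convert hasSum_pi_single j (c j) using 1
    ext n
    by_cases h : n = j <;> simp [h]

lemma exists_tsum_smul_eq_sum_add_smul {M : ℕ → ℤ} (hM : ∀ j k, j ≤ k → M j ∣ M k)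
    {x : ℕ → ℕ → ℤ} (hx : ∀ k j, j < k → x k j = 0) (K : ℕ) :
    ∃ w, ∑' k, M k • x k = ∑ k ∈ range K, M k • x k + M K • w := by
  choose c hc using fun k => hM K (k + K) (Nat.le_add_left K k)
  refine ⟨∑' k, c k • x (k + K), ?_⟩
  have hsum : Summable fun k => M k • x k :=
    summable_of_apply_eq_zero_of_lt fun k j hj => by simp [hx k j hj]
  have htail : Summable fun k => c k • x (k + K) :=
    summable_of_apply_eq_zero_of_lt fun k j hj => by simp [hx (k + K) j (by omega)]
  rw [← hsum.sum_add_tsum_nat_add K, ← htail.tsum_const_smul]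
  simp only [hc, mul_smul]

lemma map_tsum_pow_smul_eq_zero (g : (ℕ → ℤ) →+ ℤ) {p : ℕ} (hp : 1 < p)
    {x : ℕ → ℕ → ℤ} (hx : ∀ k j, j < k → x k j = 0) (hgx : ∀ k, g (x k) = 0) :
    g (∑' k, ((p : ℤ) ^ k) • x k) = 0 := by
  have hdvd (K : ℕ) : (p : ℤ) ^ K ∣ g (∑' k, ((p : ℤ) ^ k) • x k) := by
    obtain ⟨w, hw⟩ := exists_tsum_smul_eq_sum_add_smul
      (fun j k hjk => pow_dvd_pow (p : ℤ) hjk) hx K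
    simp only [hw, map_add, map_sum, map_zsmul, hgx, smul_eq_mul, mul_zero, sum_const_zero,
      zero_add]
    exact dvd_mul_right _ _
  refine Int.eq_zero_of_abs_lt_dvd (hdvd (g (∑' k, ((p : ℤ) ^ k) • x k)).natAbs) ?_
  rw [Int.abs_eq_natAbs]
  exact_mod_cast Nat.lt_pow_self hp

/-- Specker's theorem. -/
theorem addMonoidHom_eq_zero_of_map_single_one (g : (ℕ → ℤ) →+ ℤ)
    (hg : ∀ n, g (Pi.single n 1) = 0) : g = 0 := by
  ext f
  have hcop (n : ℕ) : IsCoprime ((2 : ℤ) ^ n) (3 ^ n) :=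
    (Int.isCoprime_iff_gcd_eq_one.2 rfl).pow
  choose a b hab using hcop
  have hx (c : ℕ → ℤ) : ∀ k j, j < k → (Pi.single k (c k) : ℕ → ℤ) j = 0 :=
    fun k j hj => Pi.single_eq_of_ne hj.ne _
  have hgx (c : ℕ → ℤ) (k : ℕ) : g (Pi.single k (c k)) = 0 := by
    rw [← mul_one (c k), ← smul_eq_mul, Pi.single_smul, map_zsmul, hg, smul_zero]
  have hsum (p : ℤ) (c : ℕ → ℤ) : Summable fun k => p ^ k • (Pi.single k (c k) : ℕ → ℤ) :=
    summable_of_apply_eq_zero_of_lt fun k j hj => by simp [hx c k j hj]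
  have hf : f = ∑' k, ((2 : ℕ) : ℤ) ^ k • Pi.single k (f k * a k)
      + ∑' k, ((3 : ℕ) : ℤ) ^ k • Pi.single k (f k * b k) := by
    rw [← (hsum _ _).tsum_add (hsum _ _)]
    refine (hasSum_pi_single_diag f).unique (HasSum.congr_fun ((hsum _ _).add (hsum _ _)).hasSum ?_)
    intro k
    rw [← Pi.single_smul, ← Pi.single_smul, ← Pi.single_add]
    congr 1
    push_cast
    linear_combination (-f k) * hab k
  rw [hf, map_add, map_tsum_pow_smul_eq_zero g one_lt_two (hx _) (hgx _),
    map_tsum_pow_smul_eq_zero g (by norm_num) (hx _) (hgx _), add_zero]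
  rfl

lemma exists_forall_map_ne_zero (g : ℕ → (ℕ → ℤ) →+ ℤ) {x : ℕ → ℕ → ℤ}
    (hx : ∀ k j, j < k → x k j = 0) (hgx : ∀ j k, j < k → g k (x j) = 0)
    (hgxx : ∀ k, g k (x k) ≠ 0) : ∃ z, ∀ k, g k z ≠ 0 := by
  -- With `z = ∑ M k • x k`, `g k z ≡ M k * g k (x k)` modulo `M (k + 1) = M k * Q k`,
  -- and `Q k` is chosen too large to divide `g k (x k)`.
  set Q : ℕ → ℤ := fun k => |g k (x k)| + 1
  set M : ℕ → ℤ := fun k => ∏ i ∈ range k, Q i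
  have hM : ∀ j k, j ≤ k → M j ∣ M k := fun j k hjk =>
    prod_dvd_prod_of_subset _ _ _ (range_subset_range.2 hjk)
  refine ⟨∑' k, M k • x k, fun k hk => hgxx k ?_⟩
  obtain ⟨w, hw⟩ := exists_tsum_smul_eq_sum_add_smul hM hx (k + 1)
  have hlow : ∑ j ∈ range k, g k (M j • x j) = 0 :=
    sum_eq_zero fun j hj => by rw [map_zsmul, hgx j k (mem_range.1 hj), smul_zero]
  have hMk : M k ≠ 0 := prod_ne_zero_iff.2 fun i _ => by positivity
  have hMsucc : M (k + 1) = M k * Q k := prod_range_succ _ _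
  rw [hw, map_add, map_sum, sum_range_succ, hlow, zero_add, map_zsmul, map_zsmul,
    hMsucc, smul_eq_mul, smul_eq_mul, mul_assoc, ← mul_add] at hk
  have hdvd : Q k ∣ g k (x k) :=
    ⟨-g k w, by linear_combination (mul_eq_zero.1 hk).resolve_left hMk⟩
  exact Int.eq_zero_of_abs_lt_dvd hdvd (lt_add_one _)

lemma exists_forall_notMem_of_monotone_nat {B : ℕ → AddSubgroup (ℕ → ℤ)} (hB : Monotone B)
    (hsingle : ∀ N, ∀ i < N, Pi.single i 1 ∈ B N)
    (hann : ∀ N, ∃ g : (ℕ → ℤ) →+ ℤ, B N ≤ g.ker ∧ g ≠ 0) : ∃ z, ∀ N, z ∉ B N := by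
  choose g hgB hg0 using hann
  have hsupp (N : ℕ) : ∃ i, N ≤ i ∧ g N (Pi.single i 1) ≠ 0 := by
    by_contra! h
    exact hg0 N <| addMonoidHom_eq_zero_of_map_single_one _ fun i =>
      if hi : i < N then hgB N (hsingle N i hi) else h i (not_lt.1 hi)
  choose ι hι hgι using hsupp
  -- `n (k + 1) > ι (n k)` puts every earlier witness `e (ι (n j))` into `B (n k)`.
  set n : ℕ → ℕ := fun k => (fun N => ι N + 1)^[k] 0
  have hn_succ (k : ℕ) : n (k + 1) = ι (n k) + 1 := Function.iterate_succ_apply' _ _ _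
  have hn : StrictMono n := strictMono_nat_of_lt_succ fun k => by
    rw [hn_succ]; exact Nat.lt_succ_of_le (hι _)
  obtain ⟨z, hz⟩ := exists_forall_map_ne_zero (fun k => g (n k))
    (x := fun k => Pi.single (ι (n k)) 1)
    (fun k j hj => Pi.single_eq_of_ne (by linarith [hn.le_apply (x := k), hι (n k)]) _)
    (fun j k hjk => hgB _ <| hsingle _ _ <| by
      linarith [hn_succ j, hn.monotone (Nat.succ_le_of_lt hjk)])
    (fun k => hgι _)
  exact ⟨z, fun N hzN => hz N (hgB _ (hB hn.le_apply hzN))⟩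

theorem exists_forall_notMem_of_monotone {ι : Type*} [LinearOrder ι]
    {A : ι → AddSubgroup (ℕ → ℤ)} (hA : Monotone A)
    (hann : ∀ i, ∃ g : (ℕ → ℤ) →+ ℤ, A i ≤ g.ker ∧ g ≠ 0) : ∃ z, ∀ i, z ∉ A i := by
  by_contra! hcov
  choose m hm using hcov
  by_cases hbdd : ∃ i, ∀ n, Pi.single n 1 ∈ A i
  · obtain ⟨i, hi⟩ := hbdd
    obtain ⟨g, hgA, hg0⟩ := hann i
    exact hg0 (addMonoidHom_eq_zero_of_map_single_one g fun n => hgA (hi n))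
  push Not at hbdd
  set β := partialSups fun n => m (Pi.single n 1)
  obtain ⟨z, hz⟩ := exists_forall_notMem_of_monotone_nat (B := fun N => A (β N))
    (hA.comp β.monotone)
    (fun N i hi => hA (le_partialSups_of_le _ hi.le) (hm _)) (fun N => hann (β N))
  obtain ⟨n, hn⟩ := hbdd (m z)
  have hlt : m z < m (Pi.single n 1) := lt_of_not_ge fun h => hn (hA h (hm _))
  exact hz n (hA (hlt.le.trans (le_partialSups (fun n => m (Pi.single n 1)) n)) (hm z))

lemma exists_ker_ne_zero_of_isCompl {ι : Type*} {A C : AddSubgroup (ι → ℤ)} (h : IsCompl A C)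
    (hA : A ≠ ⊤) : ∃ g : (ι → ℤ) →+ ℤ, A ≤ g.ker ∧ g ≠ 0 := by
  obtain ⟨c, hcC, hc0⟩ : ∃ c ∈ C, c ≠ 0 :=
    (C.bot_or_exists_ne_zero).resolve_left fun hC => hA (eq_top_of_isCompl_bot (hC ▸ h))
  obtain ⟨i, hci⟩ := Function.ne_iff.1 hc0
  have h' := (AddSubgroup.toIntSubmodule.isCompl h).symm
  refine ⟨(LinearMap.proj i ∘ₗ Submodule.subtype _ ∘ₗ Submodule.projectionOnto _ _ h').toAddMonoidHom,
    fun a ha => ?_, fun hg => hci ?_⟩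
  · simp [Submodule.projectionOnto_apply_right h' ⟨a, ha⟩]
  · simpa [Submodule.projectionOnto_apply_left h' ⟨c, hcC⟩] using DFunLike.congr_fun hg c

end BaerSpecker

open BaerSpecker in
/-- the Baer-Specker group `ℤ^ω` is never the union of an increasing chain
`⟨A_α : α < δ⟩` of proper subgroups each of which is a direct summand of `ℤ^ω`. -/
theorem statement5 :
    ¬ ∃ (δ : Ordinal) (A : Ordinal → AddSubgroup (ℕ → ℤ)),
      (∀ α β : Ordinal, α ≤ β → β < δ → A α ≤ A β) ∧
      (∀ α < δ, A α ≠ ⊤) ∧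
      (∀ α < δ, ∃ C : AddSubgroup (ℕ → ℤ), A α ⊓ C = ⊥ ∧ A α ⊔ C = ⊤) ∧
      (⋃ α ∈ Set.Iio δ, (A α : Set (ℕ → ℤ))) = Set.univ := by
  rintro ⟨δ, A, hchain, hproper, hsummand, hcov⟩
  obtain ⟨z, hz⟩ := exists_forall_notMem_of_monotone (ι := Set.Iio δ) (A := fun α => A α)
    (fun α β hαβ => hchain α β hαβ β.2) fun α => by
      obtain ⟨C, hinf, hsup⟩ := hsummand α α.2
      exact exists_ker_ne_zero_of_isCompl (IsCompl.of_eq hinf hsup) (hproper α α.2)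
  obtain ⟨α, hα, hzα⟩ := Set.mem_iUnion₂.1 (hcov.symm ▸ Set.mem_univ z)
  exact hz ⟨α, hα⟩ hzα
end

section
/- There is no ordinal δ and no increasing chain ⟨A_α : α < δ⟩ of subgroups of the Baer-Specker group ℤ^ω such that each A_α is a slender group and a direct summand of ℤ^ω, and ⋃_{α<δ} A_α = ℤ^ω. -/
/-- An abelian group `G` is slender if every homomorphism `ℤ^ω → G` kills all
functions vanishing below some `n`. -/
def Slender (G : Type*) [AddCommGroup G] : Prop :=
  ∀ f : (ℕ → ℤ) →+ G, ∃ n : ℕ, ∀ x : ℕ → ℤ, (∀ i < n, x i = 0) → f x = 0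


/-!
A slender direct summand `A` of `ℤ^ω` meets the subgroup of functions vanishing below some `n`
trivially: the projection onto `A` along a complement is a homomorphism `ℤ^ω → A`, so it kills
that subgroup, while it fixes `A`. Hence truncation to the first `n` coordinates is injective on
`A`. Grouping the `A_α` by this `n`, each group is a chain on whose union the truncation is still
injective, so the union is countable. The cover of `ℤ^ω` would thus be a countable union of
countable sets, yet `ℤ^ω` is uncountable.
-/

def truncate (n : ℕ) : (ℕ → ℤ) →+ (Fin n → ℤ) :=
  (LinearMap.funLeft ℤ ℤ Fin.val).toAddMonoidHom

theorem mem_ker_truncate {n : ℕ} {x : ℕ → ℤ} : x ∈ (truncate n).ker ↔ ∀ i < n, x i = 0 := by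
  rw [AddMonoidHom.mem_ker, funext_iff, Fin.forall_iff]
  rfl

theorem antitone_ker_truncate : Antitone fun n => (truncate n).ker :=
  fun _ _ hmn _ hx => mem_ker_truncate.2 fun i hi => mem_ker_truncate.1 hx i (hi.trans_le hmn)

theorem Slender.exists_disjoint_ker_truncate {A C : AddSubgroup (ℕ → ℤ)} (hA : Slender A)
    (hAC : IsCompl A C) : ∃ n, Disjoint A (truncate n).ker := by
  have hrange : IsCompl (LinearMap.range A.subtype.toIntLinearMap) C.toIntSubmodule := by
    rw [AddMonoidHom.coe_toIntLinearMap_range, AddSubgroup.range_subtype]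
    exact AddSubgroup.toIntSubmodule.isCompl hAC
  let π : (ℕ → ℤ) →+ A :=
    (LinearMap.linearProjOfIsCompl _ _ Subtype.val_injective hrange).toAddMonoidHom
  have hπ (x : A) : π x = x :=
    LinearMap.linearProjOfIsCompl_apply_left _ _ Subtype.val_injective hrange x
  obtain ⟨n, hn⟩ := hA π
  refine ⟨n, AddSubgroup.disjoint_def.2 fun {x} hxA hx => ?_⟩
  simpa [hπ ⟨x, hxA⟩] using congrArg Subtype.val (hn x (mem_ker_truncate.1 hx))

theorem AddMonoidHom.injOn_iUnion_of_directed {G H ι : Type*} [AddCommGroup G] [AddCommGroup H]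
    (φ : G →+ H) {S : ι → AddSubgroup G} (hS : Directed (· ≤ ·) S)
    (hφ : ∀ i, Disjoint (S i) φ.ker) : Set.InjOn φ (⋃ i, (S i : Set G)) := by
  rintro y ⟨_, ⟨i, rfl⟩, hy⟩ z ⟨_, ⟨j, rfl⟩, hz⟩ hyz
  obtain ⟨k, hik, hjk⟩ := hS i j
  have hker : y - z ∈ φ.ker := by simp [AddMonoidHom.mem_ker, hyz]
  exact sub_eq_zero.1 <| AddSubgroup.disjoint_def.1 (hφ k) (sub_mem (hik hy) (hjk hz)) hker

instance : Uncountable (ℕ → ℤ) := by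
  rw [← Cardinal.aleph0_lt_mk_iff]
  simpa using Cardinal.aleph0_lt_continuum

/-- the Baer-Specker group `ℤ^ω` is never the union of an increasing chain
`⟨A_α : α < δ⟩` of subgroups each of which is slender and a direct summand of `ℤ^ω`. -/
theorem statement6 :
    ¬ ∃ (δ : Ordinal) (A : Ordinal → AddSubgroup (ℕ → ℤ)),
      (∀ α β : Ordinal, α ≤ β → β < δ → A α ≤ A β) ∧
      (∀ α < δ, Slender (A α)) ∧
      (∀ α < δ, ∃ C : AddSubgroup (ℕ → ℤ), A α ⊓ C = ⊥ ∧ A α ⊔ C = ⊤) ∧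
      (⋃ α ∈ Set.Iio δ, (A α : Set (ℕ → ℤ))) = Set.univ := by
  rintro ⟨δ, A, hmono, hslender, hsummand, hcover⟩
  choose! N hN using fun α (hα : α < δ) =>
    have ⟨_, hinf, hsup⟩ := hsummand α hα
    (hslender α hα).exists_disjoint_ker_truncate (IsCompl.of_eq hinf hsup)
  let bucket (n : ℕ) : Set (ℕ → ℤ) := ⋃ α : {α // α < δ ∧ N α ≤ n}, (A α : Set (ℕ → ℤ))
  have hbucket (n : ℕ) : (bucket n).Countable := by
    have hdir : Directed (· ≤ ·) fun α : {α // α < δ ∧ N α ≤ n} => A α :=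
      Monotone.directed_le fun α β hαβ => hmono α β hαβ β.2.1
    refine (Set.mapsTo_univ (truncate n) _).countable_of_injOn ?_ Set.countable_univ
    exact (truncate n).injOn_iUnion_of_directed hdir fun α =>
      (hN α α.2.1).mono_right (antitone_ker_truncate α.2.2)
  have hcover' : Set.univ ⊆ ⋃ n, bucket n := by
    rw [← hcover]
    rintro x ⟨_, ⟨α, rfl⟩, _, ⟨hα, rfl⟩, hx⟩
    exact Set.mem_iUnion.2 ⟨N α, Set.mem_iUnion.2 ⟨⟨α, hα, le_rfl⟩, hx⟩⟩
  exact Set.not_countable_univ ((Set.countable_iUnion hbucket).mono hcover')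
end

section
/- Let ι be an infinite set that is not ω-measurable, i.e., every ultrafilter on ι that is closed under countable intersections is principal. If A is a direct summand of the group ℤ^ι of all functions ι → ℤ, then there exists a set s with |s| ≤ |ι| and a group isomorphism A ≅ ℤ^s. -/
namespace St8

open Classical in
noncomputable def ee {ι : Type} (i : ι) : ι → ℤ := Pi.single i 1

section basic
variable {ι : Type}

open Classical in
lemma phi_single (φ : (ι → ℤ) →+ ℤ) (i : ι) (c : ℤ) :
    φ (Pi.single i c) = c * φ (ee i) := by
  classical
  have h : Pi.single i c = c • (ee i) := by
    ext j
    by_cases hj : j = i <;> simp [ee, Pi.single_apply, hj]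
  rw [h, map_zsmul, smul_eq_mul]

lemma phi_finsupp (φ : (ι → ℤ) →+ ℤ) (s : Finset ι) :
    ∀ x : ι → ℤ, (∀ i ∉ s, x i = 0) → φ x = ∑ i ∈ s, x i * φ (ee i) := by
  classical
  induction s using Finset.induction_on with
  | empty =>
    intro x hx
    have : x = 0 := funext fun i => hx i (by simp)
    simp [this]
  | @insert a s ha ih =>
    intro x hx
    have hdec : x = Pi.single a (x a) + Function.update x a 0 := by
      ext j
      by_cases hj : j = a <;> simp [Pi.single_apply, Function.update, hj]
    have hupd : ∀ i ∉ s, Function.update x a 0 i = 0 := by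
      intro i hi
      by_cases hia : i = a
      · subst hia; simp
      · simp [Function.update, hia]
        exact hx i (by simp [hia, hi])
    have h1 : φ x = x a * φ (ee a) + ∑ i ∈ s, x i * φ (ee i) := by
      have := congrArg φ hdec
      rw [map_add, phi_single, ih _ hupd] at this
      rw [this]
      congr 1
      refine Finset.sum_congr rfl fun i hi => ?_
      have hne : i ≠ a := fun h => ha (h ▸ hi)
      simp [Function.update, hne]
    rw [h1, Finset.sum_insert ha]
end basic
/-- An integer divisible by `r^m` for all `m`, with `2 ≤ r`, is zero. -/
lemma eq_zero_of_pow_dvd {r c : ℤ} (hr : 2 ≤ r) (h : ∀ m : ℕ, r ^ m ∣ c) : c = 0 := by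
  by_contra hc
  set m := c.natAbs
  have h1 : r ^ m ≤ |c| := Int.le_of_dvd (abs_pos.mpr hc) ((dvd_abs _ _).mpr (h m))
  have h2 : (2:ℤ) ^ m ≤ r ^ m := pow_le_pow_left₀ (by norm_num) hr m
  have h3 : |c| < 2 ^ m := by
    have h4 := m.lt_two_pow_self
    have h5 : (m : ℤ) < 2 ^ m := by exact_mod_cast h4
    rw [Int.abs_eq_natAbs]
    exact h5
  omega

lemma phi_pow_mul (φ : (ℕ → ℤ) →+ ℤ) (he : ∀ n, φ (ee n) = 0) (r : ℤ) (hr : 2 ≤ r)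
    (y : ℕ → ℤ) : φ (fun n => r ^ n * y n) = 0 := by
  apply eq_zero_of_pow_dvd hr
  intro m
  set pre : ℕ → ℤ := fun n => if n < m then r ^ n * y n else 0 with hpre
  set u : ℕ → ℤ := fun n => if n < m then 0 else r ^ (n - m) * y n with hu
  have hsplit : (fun n => r ^ n * y n) = pre + (fun n => r ^ m * u n) := by
    ext n
    by_cases hn : n < m
    · simp [pre, u, hn]
    · have : r ^ n = r ^ m * r ^ (n - m) := by
        rw [← pow_add]; congr 1; omega
      simp [pre, u, hn, this, mul_assoc]
  have hprezero : φ pre = 0 := by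
    rw [phi_finsupp φ (Finset.range m) pre (fun i hi => by simp [pre, Finset.mem_range.not.mp hi ])]
    · refine Finset.sum_eq_zero fun i _ => by rw [he i, mul_zero]
  have : φ (fun n => r ^ n * y n) = r ^ m * φ u := by
    rw [hsplit, map_add, hprezero, zero_add]
    have : (fun n => r ^ m * u n) = (r ^ m) • u := by ext n; simp [smul_eq_mul]
    rw [this, map_zsmul, smul_eq_mul]
  exact ⟨φ u, this⟩

/-- Specker part 2: a functional on `ℤ^ℕ` killing all unit vectors is zero. -/
lemma specker_zero (φ : (ℕ → ℤ) →+ ℤ) (he : ∀ n, φ (ee n) = 0) (y : ℕ → ℤ) : φ y = 0 := by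
  have hcop : ∀ n : ℕ, ∃ a b : ℤ, a * 2 ^ n + b * 3 ^ n = 1 := by
    intro n
    exact IsCoprime.pow (⟨-1, 1, by norm_num⟩ : IsCoprime (2:ℤ) 3)
  choose a b hab using hcop
  have hdec : y = (fun n => 2 ^ n * (a n * y n)) + (fun n => 3 ^ n * (b n * y n)) := by
    ext n
    have := hab n
    have : (a n * 2 ^ n + b n * 3 ^ n) * y n = y n := by rw [this, one_mul]
    simp only [Pi.add_apply]
    linarith [this]
  rw [hdec, map_add, phi_pow_mul φ he 2 le_rfl, phi_pow_mul φ he 3 (by norm_num), add_zero]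
/-- Specker part 1 (slenderness), in a general form useful for `ι`:
if `k : ℕ → ι` is injective, then `φ (ee (k n)) = 0` for some `n`.  -/
lemma specker_slender {ι : Type} (φ : (ι → ℤ) →+ ℤ) (k : ℕ → ι) (hk : Function.Injective k) :
    ∃ n, φ (ee (k n)) = 0 := by
  classical
  by_contra hall
  push_neg at hall
  set b : ℕ → ℤ := fun n => φ (ee (k n)) with hb
  have hbne : ∀ n, b n ≠ 0 := hall
  -- recursive construction of (a m, s m)
  let F : ℕ → ℤ × ℤ → ℤ × ℤ := fun m p =>
    ⟨p.1 * (2 * |p.2 + p.1 * b m| + 1), p.2 + p.1 * b m⟩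
  let as : ℕ → ℤ × ℤ := fun m => Nat.rec ((1 : ℤ), (0 : ℤ)) F m
  set a : ℕ → ℤ := fun m => (as m).1 with ha
  set s : ℕ → ℤ := fun m => (as m).2 with hs
  have ha0 : a 0 = 1 := rfl
  have hs0 : s 0 = 0 := rfl
  have hsrec : ∀ m, s (m + 1) = s m + a m * b m := fun m => rfl
  have harec : ∀ m, a (m + 1) = a m * (2 * |s (m + 1)| + 1) := fun m => rfl
  have hapos : ∀ m, 0 < a m := by
    intro m
    induction m with
    | zero => norm_num [ha0]
    | succ n ih =>
      rw [harec n]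
      positivity
  have hbig : ∀ m, 2 * |s m| < a m := by
    intro m
    cases m with
    | zero => simp [ha0, hs0]
    | succ n =>
      rw [harec n]
      nlinarith [hapos n, abs_nonneg (s (n + 1))]
  have hdvd : ∀ m, a m ∣ a (m + 1) := fun m => ⟨_, harec m⟩
  have hdvd' : ∀ m n, m ≤ n → a m ∣ a n := by
    intro m n hmn
    induction n with
    | zero => simp_all
    | succ j ih =>
      rcases Nat.lt_or_ge m (j+1) with h | h
      · exact (ih (by omega)).trans (hdvd j)
      · have : m = j + 1 := by omega
        subst this; rfl
  have hsmono : ∀ m, |s m| < |s (m + 1)| := by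
    intro m
    have h1 : a m ≤ |a m * b m| := by
      rw [abs_mul, abs_of_pos (hapos m)]
      have : 1 ≤ |b m| := Int.one_le_abs (hbne m)
      nlinarith [hapos m]
    have h2 : |a m * b m| - |s m| ≤ |s m + a m * b m| := by
      have h := abs_sub_abs_le_abs_sub (a m * b m) (-(s m))
      simp only [abs_neg, sub_neg_eq_add] at h
      have h' : |a m * b m + s m| = |s m + a m * b m| := by rw [add_comm]
      linarith
    rw [hsrec m]
    have := hbig m
    linarith
  have hsge : ∀ m : ℕ, (m : ℤ) ≤ |s m| := by
    intro m
    induction m with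
    | zero => simp
    | succ n ih =>
      have := hsmono n
      push_cast
      omega
  -- the test vector x
  set x : ι → ℤ := fun i => if h : ∃ j, k j = i then a h.choose else 0 with hx
  have hxk : ∀ j, x (k j) = a j := by
    intro j
    have h : ∃ j', k j' = k j := ⟨j, rfl⟩
    have : h.choose = j := hk h.choose_spec
    simp [hx, h, this]
  set c : ℤ := φ x with hc
  -- key divisibility
  have hkey : ∀ m, a m ∣ c - s m := by
    intro m
    set pre : ι → ℤ := fun i => if h : ∃ j, j < m ∧ k j = i then a (h.choose) else 0 with hpre
    have hpresup : ∀ i ∉ (Finset.range m).image k, pre i = 0 := by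
      intro i hi
      simp only [hpre]
      rw [dif_neg]
      rintro ⟨j, hj, rfl⟩
      exact hi (Finset.mem_image.mpr ⟨j, Finset.mem_range.mpr hj, rfl⟩)
    have hprek : ∀ j, j < m → pre (k j) = a j := by
      intro j hj
      have h : ∃ j', j' < m ∧ k j' = k j := ⟨j, hj, rfl⟩
      have : h.choose = j := hk h.choose_spec.2
      simp [hpre, h, this]
    have hsum : ∀ m, s m = ∑ j ∈ Finset.range m, a j * b j := by
      intro m
      induction m with
      | zero => simp [hs0]
      | succ n ih => rw [hsrec n, Finset.sum_range_succ, ih]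
    have hphipre : φ pre = s m := by
      rw [phi_finsupp φ ((Finset.range m).image k) pre hpresup]
      rw [Finset.sum_image (by intro p _ q _ h; exact hk h)]
      rw [hsum m]
      refine Finset.sum_congr rfl fun j hj => ?_
      rw [hprek j (Finset.mem_range.mp hj)]
    -- tail divisible by a m
    have htail : ∀ i, a m ∣ (x - pre) i := by
      intro i
      by_cases h : ∃ j, k j = i
      · obtain ⟨j, rfl⟩ := h
        rcases Nat.lt_or_ge j m with hj | hj
        · simp [Pi.sub_apply, hxk j, hprek j hj]
        · have hzero : pre (k j) = 0 := by
            simp only [hpre]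
            rw [dif_neg]
            rintro ⟨j', hj', hkj⟩
            have := hk hkj
            omega
          simp only [Pi.sub_apply, hxk j, hzero, sub_zero]
          exact hdvd' m j hj
      · have hx0 : x i = 0 := by simp only [hx]; rw [dif_neg h]
        have hp0 : pre i = 0 := by
          simp only [hpre]
          rw [dif_neg]
          rintro ⟨j, _, rfl⟩
          exact h ⟨j, rfl⟩
        simp [Pi.sub_apply, hx0, hp0]
    choose u hu using htail
    have hxdec : x = pre + (a m) • u := by
      ext i
      have h := hu i
      simp only [Pi.sub_apply] at h
      simp only [Pi.add_apply, Pi.smul_apply, smul_eq_mul]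
      linarith
    have : c = s m + a m * φ u := by
      rw [hc, hxdec, map_add, hphipre, map_zsmul, smul_eq_mul]
    exact ⟨φ u, by omega⟩
  -- contradiction
  set m : ℕ := c.natAbs + 1 with hm
  have h1 : |c| < |s m| := by
    have := hsge m
    have : (c.natAbs : ℤ) + 1 ≤ |s m| := by rw [← Nat.cast_succ]; exact this
    rw [Int.abs_eq_natAbs]; omega
  have h2 : c - s m ≠ 0 := by
    intro h
    have : c = s m := by omega
    rw [this] at h1; omega
  have h3 : a m ≤ |c - s m| := Int.le_of_dvd (abs_pos.mpr h2) ((dvd_abs _ _).mpr (hkey m))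
  have h4 : |c - s m| ≤ |c| + |s m| := abs_sub _ _
  have := hbig m
  omega
/-- The set of indices where a functional is nonzero on unit vectors is finite. -/
lemma specker_finite {ι : Type} (g : (ι → ℤ) →+ ℤ) : {i | g (ee i) ≠ 0}.Finite := by
  by_contra h
  have hinf : {i | g (ee i) ≠ 0}.Infinite := h
  set k := hinf.natEmbedding
  obtain ⟨n, hn⟩ := specker_slender g (fun n => (k n : ι))
    (fun p q hpq => k.injective (Subtype.ext hpq))
  exact (k n).2 hn

/-- Full Specker representation over ℕ. -/
lemma specker_repr (g : (ℕ → ℤ) →+ ℤ) (y : ℕ → ℤ) :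
    g y = ∑ n ∈ (specker_finite g).toFinset, g (ee n) * y n := by
  classical
  set F := (specker_finite g).toFinset with hF
  set p : (ℕ → ℤ) →+ ℤ :=
    { toFun := fun y => ∑ n ∈ F, g (ee n) * y n
      map_zero' := by simp
      map_add' := by
        intro u v
        rw [← Finset.sum_add_distrib]
        exact Finset.sum_congr rfl fun n _ => by simp [mul_add] } with hp
  have hpe : ∀ m, p (ee m) = g (ee m) := by
    intro m
    show (∑ n ∈ F, g (ee n) * ee m n) = g (ee m)
    have : ∀ n ∈ F, g (ee n) * ee m n = if n = m then g (ee n) else 0 := by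
      intro n _
      by_cases hnm : n = m <;> simp [ee, Pi.single_apply, hnm]
    rw [Finset.sum_congr rfl this, Finset.sum_ite_eq' F m (fun n => g (ee n))]
    by_cases hm : m ∈ F
    · simp [hm]
    · have : g (ee m) = 0 := by
        by_contra hne
        exact hm (by rw [hF]; exact (Set.Finite.mem_toFinset _).mpr hne)
      simp [hm, this]
  have : ∀ z, (g - p) z = 0 := by
    apply specker_zero
    intro n
    simp [hpe n]
  have h := this y
  simp only [AddMonoidHom.sub_apply] at h
  have hpy : p y = ∑ n ∈ F, g (ee n) * y n := rfl
  omega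
section los
variable {ι : Type}

/-- Łoś's theorem, kernel part: over a non-ω-measurable index set, a functional killing
all unit vectors is zero. -/
theorem los_zero
    (hmeas : ∀ U : Ultrafilter ι,
      (∀ f : ℕ → Set ι, (∀ n, f n ∈ U) → (⋂ n, f n) ∈ U) → ∃ a : ι, ({a} : Set ι) ∈ U)
    (φ : (ι → ℤ) →+ ℤ) (he : ∀ i, φ (ee i) = 0) (x : ι → ℤ) : φ x = 0 := by
  classical
  by_contra hx
  set μ : Set ι → ℤ := fun S => φ (S.indicator x) with hμ
  set Null : Set ι → Prop := fun S => ∀ T, T ⊆ S → μ T = 0 with hNull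
  -- singletons are null
  have hsingle : ∀ a : ι, Null {a} := by
    intro a T hT
    rcases Set.subset_singleton_iff_eq.mp hT with rfl | rfl
    · show φ (Set.indicator ∅ x) = 0
      rw [Set.indicator_empty]
      exact map_zero φ
    · have hind : ({a} : Set ι).indicator x = Pi.single a (x a) := by
        ext i
        by_cases hi : i = a <;> simp [Set.indicator_apply, Pi.single_apply, hi]
      show φ (({a} : Set ι).indicator x) = 0
      rw [hind, phi_single, he a, mul_zero]
  -- countable additivity package for pairwise disjoint families
  have F1 : ∀ f : ℕ → Set ι, (∀ m n, m ≠ n → f m ∩ f n = ∅) →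
      ∃ F : Finset ℕ, (∀ n ∉ F, μ (f n) = 0) ∧ μ (⋃ n, f n) = ∑ n ∈ F, μ (f n) := by
    intro f hdisj
    set Ψ : (ℕ → ℤ) →+ (ι → ℤ) :=
      { toFun := fun a => fun i => if h : ∃ n, i ∈ f n then a h.choose * x i else 0
        map_zero' := by ext i; by_cases h : ∃ n, i ∈ f n <;> simp [h]
        map_add' := by
          intro u v
          ext i
          by_cases h : ∃ n, i ∈ f n <;> simp [h, add_mul] } with hΨ
    set g : (ℕ → ℤ) →+ ℤ := φ.comp Ψ with hg
    have hmem_unique : ∀ (i : ι) (n : ℕ), i ∈ f n → ∀ m, i ∈ f m → m = n := by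
      intro i n hin m him
      by_contra hmn
      have h2 : i ∈ f m ∩ f n := ⟨him, hin⟩
      rw [hdisj m n hmn] at h2
      exact h2
    have hΨe : ∀ n, Ψ (ee n) = (f n).indicator x := by
      intro n
      ext i
      show (if h : ∃ m, i ∈ f m then (ee n) h.choose * x i else 0) = (f n).indicator x i
      by_cases hin : i ∈ f n
      · have h : ∃ m, i ∈ f m := ⟨n, hin⟩
        have hc : h.choose = n := hmem_unique i n hin h.choose h.choose_spec
        rw [dif_pos h, hc, Set.indicator_of_mem hin]
        simp [ee]
      · by_cases h : ∃ m, i ∈ f m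
        · have hc : h.choose ≠ n := by
            intro hcn
            exact hin (hcn ▸ h.choose_spec)
          rw [dif_pos h, Set.indicator_of_notMem hin]
          simp [ee, Pi.single_apply, hc]
        · rw [dif_neg h, Set.indicator_of_notMem hin]
    have hge : ∀ n, g (ee n) = μ (f n) := by
      intro n
      show φ (Ψ (ee n)) = μ (f n)
      rw [hΨe n]
    have hΨone : Ψ (fun _ => (1 : ℤ)) = (⋃ n, f n).indicator x := by
      ext i
      show (if h : ∃ m, i ∈ f m then 1 * x i else 0) = _
      by_cases h : ∃ m, i ∈ f m
      · have hm : i ∈ ⋃ n, f n := Set.mem_iUnion.mpr h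
        rw [dif_pos h, Set.indicator_of_mem hm, one_mul]
      · have hm : i ∉ ⋃ n, f n := by
          rw [Set.mem_iUnion]
          exact h
        rw [dif_neg h, Set.indicator_of_notMem hm]
    refine ⟨(specker_finite g).toFinset, ?_, ?_⟩
    · intro n hn
      rw [← hge n]
      by_contra hc
      exact hn ((specker_finite g).mem_toFinset.mpr hc)
    · have h1 := specker_repr g (fun _ => (1 : ℤ))
      have h2 : g (fun _ => (1:ℤ)) = μ (⋃ n, f n) := by
        show φ (Ψ fun _ => 1) = _
        rw [hΨone]
      rw [h2] at h1
      rw [h1]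
      exact Finset.sum_congr rfl fun n _ => by rw [hge n, mul_one]
  -- null sets form a σ-ideal
  have hNullMono : ∀ S T : Set ι, T ⊆ S → Null S → Null T :=
    fun S T hTS hS T' hT' => hS T' (hT'.trans hTS)
  have hNullSigma : ∀ f : ℕ → Set ι, (∀ n, Null (f n)) → Null (⋃ n, f n) := by
    intro f hf T hT
    set t : ℕ → Set ι := fun n => (T ∩ f n) \ (⋃ m ∈ Finset.range n, f m) with ht
    have htdisj : ∀ m n, m ≠ n → t m ∩ t n = ∅ := by
      intro m n hmn
      ext i
      simp only [Set.mem_inter_iff, Set.mem_empty_iff_false, iff_false]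
      rintro ⟨him, hin⟩
      rcases Nat.lt_or_ge m n with h | h
      · exact hin.2 (Set.mem_biUnion (Finset.mem_range.mpr h) him.1.2)
      · have h' : n < m := by omega
        exact him.2 (Set.mem_biUnion (Finset.mem_range.mpr h') hin.1.2)
    have htT : (⋃ n, t n) = T := by
      ext i
      simp only [Set.mem_iUnion]
      constructor
      · rintro ⟨n, hn⟩
        exact hn.1.1
      · intro hi
        have hex : ∃ n, i ∈ f n := Set.mem_iUnion.mp (hT hi)
        refine ⟨Nat.find hex, ⟨⟨hi, Nat.find_spec hex⟩, ?_⟩⟩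
        intro hmem
        simp only [Set.mem_iUnion, Finset.mem_range] at hmem
        obtain ⟨m, hm1, hm2⟩ := hmem
        exact Nat.find_min hex hm1 hm2
    have htnull : ∀ n, μ (t n) = 0 := by
      intro n
      exact hf n (t n) (fun i hi => hi.1.2)
    obtain ⟨F, _, hsum⟩ := F1 t htdisj
    rw [htT] at hsum
    rw [hsum]
    exact Finset.sum_eq_zero fun n _ => htnull n
  have hNullUnion : ∀ S S' : Set ι, Null S → Null S' → Null (S ∪ S') := by
    intro S S' hS hS'
    have := hNullSigma (fun n => if n = 0 then S else S') (by
      intro n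
      by_cases h : n = 0
      · simpa [h] using hS
      · simpa [h] using hS')
    refine hNullMono _ _ ?_ this
    intro i hi
    rcases hi with hi | hi
    · exact Set.mem_iUnion.mpr ⟨0, by simpa using hi⟩
    · exact Set.mem_iUnion.mpr ⟨1, by simpa using hi⟩
  -- univ is not null
  have hI : ¬ Null Set.univ := by
    intro h
    apply hx
    have h2 := h Set.univ subset_rfl
    simp only [hμ] at h2
    rwa [Set.indicator_univ] at h2
  -- atom existence
  have hatom : ∃ S : Set ι, ¬ Null S ∧ ∀ T, T ⊆ S → Null T ∨ Null (S \ T) := by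
    by_contra hno
    push_neg at hno
    have hsplit : ∀ S : Set ι, ¬ Null S → ∃ T, T ⊆ S ∧ ¬ Null T ∧ ¬ Null (S \ T) := by
      intro S hS
      obtain ⟨T, hT1, hT2, hT3⟩ := hno S hS
      exact ⟨T, hT1, hT2, hT3⟩
    choose Tf hTf1 hTf2 hTf3 using hsplit
    set R : ℕ → {S : Set ι // ¬ Null S} :=
      fun n => Nat.rec ⟨Set.univ, hI⟩ (fun _ p => ⟨p.1 \ Tf p.1 p.2, hTf3 p.1 p.2⟩) n with hR
    set Sf : ℕ → Set ι := fun n => Tf (R n).1 (R n).2 with hSf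
    have hRstep : ∀ n, (R (n+1)).1 = (R n).1 \ Sf n := fun n => rfl
    have hRmono : ∀ m n, m ≤ n → (R n).1 ⊆ (R m).1 := by
      intro m n hmn
      induction n with
      | zero => 
        have : m = 0 := by omega
        subst this
        exact subset_rfl
      | succ j ih =>
        rcases Nat.lt_or_ge m (j+1) with h | h
        · refine (fun i hi => ih (by omega) ?_)
          rw [hRstep j] at hi
          exact hi.1
        · have : m = j + 1 := by omega
          subst this
          exact subset_rfl
    have hSsub : ∀ n, Sf n ⊆ (R n).1 := fun n => hTf1 _ _
    have hSdisj : ∀ m n, m ≠ n → Sf m ∩ Sf n = ∅ := by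
      have key : ∀ m n, m < n → Sf m ∩ Sf n = ∅ := by
        intro m n hmn
        ext i
        simp only [Set.mem_inter_iff, Set.mem_empty_iff_false, iff_false]
        rintro ⟨him, hin⟩
        have h1 : i ∈ (R n).1 := hSsub n hin
        have h2 : i ∈ (R (m+1)).1 := hRmono (m+1) n (by omega) h1
        rw [hRstep m] at h2
        exact h2.2 him
      intro m n hmn
      rcases Nat.lt_or_ge m n with h | h
      · exact key m n h
      · rw [Set.inter_comm]
        exact key n m (by omega)
    have hSnotnull : ∀ n, ¬ Null (Sf n) := fun n => hTf2 _ _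
    have hpick : ∀ n, ∃ T, T ⊆ Sf n ∧ μ T ≠ 0 := by
      intro n
      have h := hSnotnull n
      simp only [hNull] at h
      push_neg at h
      exact h
    choose T' hT'sub hT'ne using hpick
    have hT'disj : ∀ m n, m ≠ n → T' m ∩ T' n = ∅ := by
      intro m n hmn
      have := hSdisj m n hmn
      apply Set.eq_empty_of_subset_empty
      rw [← this]
      exact Set.inter_subset_inter (hT'sub m) (hT'sub n)
    obtain ⟨F, hF0, _⟩ := F1 T' hT'disj
    obtain ⟨n, hn⟩ := Finset.exists_notMem F
    exact hT'ne n (hF0 n hn)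
  obtain ⟨Sa, hSa1, hSa2⟩ := hatom
  -- build the ultrafilter
  set Fl : Filter ι :=
    { sets := {Rs : Set ι | Null (Sa \ Rs)}
      univ_sets := by
        show Null (Sa \ Set.univ)
        rw [Set.diff_univ]
        intro T hT
        rw [Set.subset_empty_iff] at hT
        subst hT
        show φ (Set.indicator ∅ x) = 0
        rw [Set.indicator_empty]
        exact map_zero φ
      sets_of_superset := by
        intro u v hu huv
        exact hNullMono _ _ (Set.diff_subset_diff_right huv) hu
      inter_sets := by
        intro u v hu hv
        refine hNullMono _ _ ?_ (hNullUnion _ _ hu hv)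
        rw [Set.diff_inter] } with hFl
  have hmemFl : ∀ Rs : Set ι, Rs ∈ Fl ↔ Null (Sa \ Rs) := fun _ => Iff.rfl
  have hnotboth : ∀ Rs : Set ι, Null (Sa \ Rs) → Null (Sa \ Rsᶜ) → False := by
    intro Rs h1 h2
    apply hSa1
    refine hNullMono _ _ ?_ (hNullUnion _ _ h1 h2)
    intro i hi
    by_cases h : i ∈ Rs
    · exact Or.inr ⟨hi, by simp [h]⟩
    · exact Or.inl ⟨hi, h⟩
  set U : Ultrafilter ι := Ultrafilter.ofComplNotMemIff Fl (by
    intro s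
    rw [hmemFl, hmemFl]
    constructor
    · intro h1
      rcases hSa2 (Sa ∩ s) Set.inter_subset_left with h | h
      · exfalso
        apply h1
        have : Sa \ sᶜ = Sa ∩ s := by
          ext i
          simp [Set.mem_diff]
        rwa [this]
      · have : Sa \ (Sa ∩ s) = Sa \ s := by
          ext i
          simp [Set.mem_diff]
        rwa [this] at h
    · intro h1 h2
      exact hnotboth s h1 h2) with hU
  have hmemU : ∀ Rs : Set ι, Rs ∈ U ↔ Null (Sa \ Rs) := fun _ => Iff.rfl
  -- countable completeness
  have hcc : ∀ f : ℕ → Set ι, (∀ n, f n ∈ U) → (⋂ n, f n) ∈ U := by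
    intro f hf
    rw [hmemU]
    rw [Set.diff_iInter]
    exact hNullSigma _ fun n => (hmemU (f n)).mp (hf n)
  obtain ⟨a, ha⟩ := hmeas U hcc
  rw [hmemU] at ha
  apply hSa1
  refine hNullMono _ _ ?_ (hNullUnion _ _ ha (hsingle a))
  intro i hi
  by_cases h : i = a
  · exact Or.inr (by simp [h])
  · exact Or.inl ⟨hi, by simp [h]⟩
end los
/-- Every submodule of `ι →₀ ℤ` is free, with basis of cardinality at most `#ι`. -/
theorem exists_basis_submodule (ι : Type) (N : Submodule ℤ (ι →₀ ℤ)) :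
    ∃ (lam : Type) (_ : Module.Basis lam ℤ N), Cardinal.mk lam ≤ Cardinal.mk ι := by
  classical
  letI : LinearOrder ι := IsWellOrder.linearOrder WellOrderingRel
  haveI : WellFoundedLT ι := ⟨(inferInstance : IsWellOrder ι WellOrderingRel).wf⟩
  -- leading coefficient ideals
  set J : ι → Ideal ℤ := fun i =>
    { carrier := {c : ℤ | ∃ d ∈ N, d i = c ∧ ∀ j, i < j → d j = 0}
      add_mem' := by
        rintro c c' ⟨d, hd, rfl, hd0⟩ ⟨d', hd', rfl, hd'0⟩
        exact ⟨d + d', N.add_mem hd hd', by simp, fun j hj => by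
          simp [hd0 j hj, hd'0 j hj]⟩
      zero_mem' := ⟨0, N.zero_mem, by simp, by simp⟩
      smul_mem' := by
        rintro z c ⟨d, hd, rfl, hd0⟩
        exact ⟨z • d, N.smul_mem z hd, by simp, fun j hj => by
          simp [hd0 j hj]⟩ } with hJ
  set g : ι → ℤ := fun i => Submodule.IsPrincipal.generator (J i) with hg
  set lam : Type := {i : ι // J i ≠ ⊥} with hlam
  have hpick : ∀ l : lam, ∃ d, d ∈ N ∧ d l.1 = g l.1 ∧ ∀ j, l.1 < j → d j = 0 := by
    intro l
    have := Submodule.IsPrincipal.generator_mem (J l.1)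
    exact this
  choose y hyN hyg hy0 using hpick
  have hgne : ∀ l : lam, g l.1 ≠ 0 := by
    intro l hzero
    exact l.2 ((Submodule.IsPrincipal.eq_bot_iff_generator_eq_zero (J l.1)).mpr hzero)
  set v : lam → N := fun l => ⟨y l, hyN l⟩ with hv
  -- linear independence
  have hli : LinearIndependent ℤ v := by
    rw [linearIndependent_iff]
    intro c hc
    by_contra hne
    have hsupp : c.support.Nonempty := Finsupp.support_nonempty_iff.mpr hne
    have himg : (c.support.image (fun l : lam => l.1)).Nonempty := hsupp.image _
    set i0 : ι := (c.support.image (fun l : lam => l.1)).max' himg with hi0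
    have hi0mem : i0 ∈ c.support.image (fun l : lam => l.1) := Finset.max'_mem _ _
    obtain ⟨l0, hl0mem, hl0⟩ := Finset.mem_image.mp hi0mem
    -- evaluate the relation at coordinate i0
    have hval : ((Finsupp.linearCombination ℤ v c : N) : ι →₀ ℤ) i0 = 0 := by
      rw [hc]; rfl
    rw [Finsupp.linearCombination_apply, Finsupp.sum] at hval
    have hcoe : ((∑ l ∈ c.support, c l • v l : N) : ι →₀ ℤ) i0
        = ∑ l ∈ c.support, c l * y l i0 := by
      rw [AddSubmonoidClass.coe_finset_sum]
      rw [Finsupp.finset_sum_apply]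
      refine Finset.sum_congr rfl fun l _ => ?_
      simp [hv, smul_eq_mul]
    rw [hcoe] at hval
    have hterm : ∀ l ∈ c.support, c l * y l i0 = if l = l0 then c l * g l.1 else 0 := by
      intro l hl
      by_cases hll : l = l0
      · subst hll
        rw [if_pos rfl, ← hl0, hyg]
      · rw [if_neg hll]
        have hlle : l.1 ≤ i0 := Finset.le_max' _ _ (Finset.mem_image.mpr ⟨l, hl, rfl⟩)
        have hlne : l.1 ≠ i0 := fun h => hll (Subtype.ext (h.trans hl0.symm))
        have : l.1 < i0 := lt_of_le_of_ne hlle hlne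
        rw [hy0 l i0 this, mul_zero]
    rw [Finset.sum_congr rfl hterm, Finset.sum_ite_eq' c.support l0 (fun l => c l * g l.1)] at hval
    rw [if_pos hl0mem] at hval
    have := mul_ne_zero (Finsupp.mem_support_iff.mp hl0mem) (hgne l0)
    exact this hval
  -- spanning
  set spanY : Submodule ℤ (ι →₀ ℤ) := Submodule.span ℤ (Set.range fun l : lam => y l) with hspanY
  have hstep : ∀ i : ι, (∀ i' : ι, i' < i → ∀ d ∈ N, (∀ j, d j ≠ 0 → j ≤ i') → d ∈ spanY) →
      ∀ d ∈ N, (∀ j, d j ≠ 0 → j ≤ i) → d i = 0 → d ∈ spanY := by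
    intro i ih d hdN hdb hdi
    by_cases hd0 : d = 0
    · rw [hd0]; exact spanY.zero_mem
    · have hne : d.support.Nonempty := Finsupp.support_nonempty_iff.mpr hd0
      set i1 : ι := d.support.max' hne with hi1
      have hi1mem := Finset.max'_mem d.support hne
      have hi1b : i1 ≤ i := hdb i1 (Finsupp.mem_support_iff.mp hi1mem)
      have hi1lt : i1 < i := lt_of_le_of_ne hi1b (by
        intro h
        apply Finsupp.mem_support_iff.mp hi1mem
        show d i1 = 0
        rw [h]
        exact hdi)
      exact ih i1 hi1lt d hdN fun j hj =>
        Finset.le_max' _ _ (Finsupp.mem_support_iff.mpr hj)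
  have main : ∀ i : ι, ∀ d ∈ N, (∀ j, d j ≠ 0 → j ≤ i) → d ∈ spanY := by
    intro i
    induction i using WellFoundedLT.induction with
    | ind i ih =>
      intro d hdN hdb
      by_cases hdi : d i = 0
      · exact hstep i ih d hdN hdb hdi
      · have hdJ : d i ∈ J i := ⟨d, hdN, rfl, fun j hj => by
          by_contra hne
          exact absurd (hdb j hne) (not_le.mpr hj)⟩
        have hJne : J i ≠ ⊥ := by
          intro h
          rw [h] at hdJ
          exact hdi hdJ
        set l : lam := ⟨i, hJne⟩ with hl
        obtain ⟨q, hq⟩ := (Submodule.IsPrincipal.mem_iff_eq_smul_generator (J i)).mp hdJ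
        set d' : ι →₀ ℤ := d - q • y l with hd'
        have hd'N : d' ∈ N := N.sub_mem hdN (N.smul_mem q (hyN l))
        have hd'b : ∀ j, d' j ≠ 0 → j ≤ i := by
          intro j hj
          by_contra hgt
          push_neg at hgt
          apply hj
          have h1 : d j = 0 := by
            by_contra hne
            exact absurd (hdb j hne) (not_le.mpr hgt)
          have h2 : y l j = 0 := hy0 l j hgt
          simp [hd', h1, h2]
        have hd'i : d' i = 0 := by
          have : y l i = g i := hyg l
          simp [hd', this, hq, smul_eq_mul]
          exact sub_self _
        have hd'span : d' ∈ spanY := hstep i ih d' hd'N hd'b hd'i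
        have hylspan : y l ∈ spanY := Submodule.subset_span ⟨l, rfl⟩
        have : d = d' + q • y l := by simp [hd']
        rw [this]
        exact spanY.add_mem hd'span (spanY.smul_mem q hylspan)
  have hspan_top : ∀ d ∈ N, d ∈ spanY := by
    intro d hdN
    by_cases hd0 : d = 0
    · rw [hd0]; exact spanY.zero_mem
    · have hne : d.support.Nonempty := Finsupp.support_nonempty_iff.mpr hd0
      exact main (d.support.max' hne) d hdN fun j hj =>
        Finset.le_max' _ _ (Finsupp.mem_support_iff.mpr hj)
  -- build the basis
  have hspan : ⊤ ≤ Submodule.span ℤ (Set.range v) := by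
    intro n _
    have h1 : (n : ι →₀ ℤ) ∈ spanY := hspan_top n n.2
    have hsets : (⇑N.subtype '' Set.range v) = Set.range fun l : lam => y l := by
      ext z
      simp only [Set.mem_image, Set.mem_range]
      constructor
      · rintro ⟨w, ⟨l, rfl⟩, rfl⟩
        exact ⟨l, rfl⟩
      · rintro ⟨l, rfl⟩
        exact ⟨v l, ⟨l, rfl⟩, rfl⟩
    have h2 : spanY = Submodule.map N.subtype (Submodule.span ℤ (Set.range v)) := by
      rw [Submodule.map_span, hsets]
    rw [h2] at h1
    obtain ⟨w, hw, hweq⟩ := h1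
    have : w = n := Subtype.ext hweq
    rwa [← this]
  exact ⟨lam, Module.Basis.mk hli hspan, Cardinal.mk_subtype_le _⟩
section pairing
variable {ι : Type}

/-- The canonical pairing `(ι →₀ ℤ) × (ι → ℤ) → ℤ`. -/
noncomputable def pair (d : ι →₀ ℤ) (x : ι → ℤ) : ℤ := Finsupp.linearCombination ℤ x d

lemma pair_apply (d : ι →₀ ℤ) (x : ι → ℤ) :
    pair d x = ∑ i ∈ d.support, d i * x i := by
  rw [pair, Finsupp.linearCombination_apply, Finsupp.sum]
  exact Finset.sum_congr rfl fun i _ => by rw [smul_eq_mul]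

lemma pair_add_left (d d' : ι →₀ ℤ) (x : ι → ℤ) :
    pair (d + d') x = pair d x + pair d' x := by
  unfold pair
  rw [map_add]

lemma pair_smul_left (q : ℤ) (d : ι →₀ ℤ) (x : ι → ℤ) :
    pair (q • d) x = q * pair d x := by
  unfold pair
  rw [map_smul, smul_eq_mul]

lemma pair_zero_left (x : ι → ℤ) : pair (0 : ι →₀ ℤ) x = 0 := by
  unfold pair
  rw [map_zero]

lemma pair_sum_left {κ : Type} (s : Finset κ) (f : κ → (ι →₀ ℤ)) (x : ι → ℤ) :
    pair (∑ i ∈ s, f i) x = ∑ i ∈ s, pair (f i) x := by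
  unfold pair
  rw [map_sum]

lemma pair_ee (d : ι →₀ ℤ) (j : ι) : pair d (ee j) = d j := by
  classical
  rw [pair_apply]
  have h : ∀ i ∈ d.support, d i * ee j i = if i = j then d i else 0 := by
    intro i _
    by_cases hij : i = j <;> simp [ee, Pi.single_apply, hij]
  rw [Finset.sum_congr rfl h, Finset.sum_ite_eq' d.support j (fun i => d i)]
  by_cases hj : j ∈ d.support
  · rw [if_pos hj]
  · rw [if_neg hj]
    exact (Finsupp.notMem_support_iff.mp hj).symm

lemma pair_ext {d d' : ι →₀ ℤ} (h : ∀ x, pair d x = pair d' x) : d = d' := by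
  ext j
  rw [← pair_ee d j, ← pair_ee d' j, h]

lemma pair_add_right (d : ι →₀ ℤ) (x y : ι → ℤ) :
    pair d (x + y) = pair d x + pair d y := by
  rw [pair_apply, pair_apply, pair_apply, ← Finset.sum_add_distrib]
  exact Finset.sum_congr rfl fun i _ => by simp [mul_add]

lemma pair_smul_right (d : ι →₀ ℤ) (q : ℤ) (x : ι → ℤ) :
    pair d (q • x) = q * pair d x := by
  rw [pair_apply, pair_apply, Finset.mul_sum]
  exact Finset.sum_congr rfl fun i _ => by simp [smul_eq_mul]; ring

/-- Łoś's theorem: every functional on `ℤ^ι` is represented by a finitely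
supported vector. -/
theorem los
    (hmeas : ∀ U : Ultrafilter ι,
      (∀ f : ℕ → Set ι, (∀ n, f n ∈ U) → (⋂ n, f n) ∈ U) → ∃ a : ι, ({a} : Set ι) ∈ U)
    (φ : (ι → ℤ) →+ ℤ) : ∃ d : ι →₀ ℤ, ∀ x, φ x = pair d x := by
  classical
  set d : ι →₀ ℤ :=
    ⟨(specker_finite φ).toFinset, fun i => φ (ee i), by
      intro i
      rw [Set.Finite.mem_toFinset]
      exact Iff.rfl⟩ with hd
  refine ⟨d, fun x => ?_⟩
  set ψ : (ι → ℤ) →+ ℤ :=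
    { toFun := fun x => pair d x
      map_zero' := by
        show pair d 0 = 0
        rw [pair_apply]
        simp
      map_add' := fun u v => pair_add_right d u v } with hψ
  have hψe : ∀ i, (φ - ψ) (ee i) = 0 := by
    intro i
    have h1 : ψ (ee i) = φ (ee i) := by
      show pair d (ee i) = φ (ee i)
      rw [pair_ee]
      rfl
    simp [AddMonoidHom.sub_apply, h1]
  have := los_zero hmeas (φ - ψ) hψe x
  simp only [AddMonoidHom.sub_apply] at this
  have hψx : ψ x = pair d x := rfl
  omega
end pairing


end St8

open St8 in
/-- if `ι` is an infinite set that is not ω-measurable (every ultrafilter on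
`ι` closed under countable intersections is principal), then every direct summand `A` of
`ℤ^ι` is isomorphic to `ℤ^λ` for some set `λ` of cardinality at most that of `ι`. -/
theorem statement8 (ι : Type) [Infinite ι]
    (hmeas : ∀ U : Ultrafilter ι,
      (∀ f : ℕ → Set ι, (∀ n, f n ∈ U) → (⋂ n, f n) ∈ U) → ∃ a : ι, ({a} : Set ι) ∈ U)
    (A : AddSubgroup (ι → ℤ))
    (hsummand : ∃ C : AddSubgroup (ι → ℤ), A ⊓ C = ⊥ ∧ A ⊔ C = ⊤) :
    ∃ (lam : Type), Cardinal.mk lam ≤ Cardinal.mk ι ∧ Nonempty (A ≃+ (lam → ℤ)) := by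
  classical
  obtain ⟨C, hinf, hsup⟩ := hsummand
  set A' : Submodule ℤ (ι → ℤ) := AddSubgroup.toIntSubmodule A with hA'
  set C' : Submodule ℤ (ι → ℤ) := AddSubgroup.toIntSubmodule C with hC'
  have hcompl : IsCompl A' C' := by
    constructor
    · rw [disjoint_iff]
      rw [hA', hC', ← AddSubgroup.toIntSubmodule.map_inf, hinf]
      exact map_bot _
    · rw [codisjoint_iff]
      rw [hA', hC', ← map_sup AddSubgroup.toIntSubmodule, hsup]
      exact map_top _
  set π : (ι → ℤ) →ₗ[ℤ] (ι → ℤ) := A'.subtype ∘ₗ A'.linearProjOfIsCompl C' hcompl with hπ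
  have hπA : ∀ a : ι → ℤ, a ∈ A' → π a = a := by
    intro a ha
    show ((A'.linearProjOfIsCompl C' hcompl) a : ι → ℤ) = a
    have h := Submodule.linearProjOfIsCompl_apply_left hcompl ⟨a, ha⟩
    rw [show (A'.linearProjOfIsCompl C' hcompl) a = ⟨a, ha⟩ from h]
  have hπmem : ∀ x, π x ∈ A' := fun x => (A'.linearProjOfIsCompl C' hcompl x).2
  have hππ : ∀ x, π (π x) = π x := fun x => hπA _ (hπmem x)
  -- the dual submodule
  set N : Submodule ℤ (ι →₀ ℤ) :=
    { carrier := {d | ∀ x, pair d x = pair d (π x)}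
      add_mem' := by
        intro d d' hd hd' x
        show pair (d + d') x = pair (d + d') (π x)
        rw [pair_add_left, pair_add_left, hd x, hd' x]
      zero_mem' := by
        intro x
        show pair 0 x = pair 0 (π x)
        rw [pair_zero_left, pair_zero_left]
      smul_mem' := by
        intro q d hd x
        show pair (q • d) x = pair (q • d) (π x)
        rw [pair_smul_left, pair_smul_left, hd x] } with hN
  obtain ⟨lam, b, hcard⟩ := exists_basis_submodule ι N
  -- the dual representation of coordinates of π
  have hdd : ∀ i : ι, ∃ d : ι →₀ ℤ, ∀ x, π x i = pair d x := by
    intro i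
    obtain ⟨d, hd⟩ := los hmeas
      { toFun := fun x => π x i
        map_zero' := by show π 0 i = 0; rw [map_zero]; rfl
        map_add' := fun u v => by show π (u + v) i = _; rw [map_add]; rfl }
    exact ⟨d, fun x => hd x⟩
  choose dd hddspec using hdd
  have hddN : ∀ i, dd i ∈ N := by
    intro i x
    rw [← hddspec i x, ← hddspec i (π x), hππ]
  -- d ∈ N is recovered from the dd i
  have hrep : ∀ d ∈ N, ∑ i ∈ d.support, d i • dd i = d := by
    intro d hd
    apply pair_ext
    intro x
    have h1 : pair (∑ i ∈ d.support, d i • dd i) x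
        = ∑ i ∈ d.support, d i * pair (dd i) x := by
      rw [pair_sum_left]
      exact Finset.sum_congr rfl fun i _ => pair_smul_left _ _ _
    rw [h1]
    have h2 : ∀ i ∈ d.support, d i * pair (dd i) x = d i * π x i := by
      intro i _
      rw [← hddspec i x]
    rw [Finset.sum_congr rfl h2, ← pair_apply d (π x)]
    exact (hd x).symm
  -- the comparison map
  set Θ : A' →ₗ[ℤ] (lam → ℤ) :=
    { toFun := fun a => fun l => pair (b l : ι →₀ ℤ) (a : ι → ℤ)
      map_add' := by
        intro u v
        ext l
        exact pair_add_right _ _ _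
      map_smul' := by
        intro q u
        ext l
        exact pair_smul_right _ q _ } with hΘ
  have hinj : Function.Injective Θ := by
    rw [injective_iff_map_eq_zero]
    intro a ha
    have hall : ∀ d : N, pair (d : ι →₀ ℤ) (a : ι → ℤ) = 0 := by
      set f : N →ₗ[ℤ] ℤ := (Finsupp.linearCombination ℤ (a : ι → ℤ)) ∘ₗ N.subtype with hf
      have hfb : ∀ l, f (b l) = (0 : N →ₗ[ℤ] ℤ) (b l) := by
        intro l
        have := congrFun ha l
        exact this
      have : f = 0 := b.ext hfb
      intro d
      have := congrFun (congrArg DFunLike.coe this) d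
      exact this
    have hcoord : ∀ i : ι, (a : ι → ℤ) i = 0 := by
      intro i
      have h1 : (a : ι → ℤ) i = π (a : ι → ℤ) i := by
        rw [hπA _ a.2]
      rw [h1, hddspec i]
      exact hall ⟨dd i, hddN i⟩
    exact Subtype.ext (funext hcoord)
  have hsurj : Function.Surjective Θ := by
    intro c
    set Ξ : N →ₗ[ℤ] ℤ := b.constr ℤ c with hΞ
    set x0 : ι → ℤ := fun i => Ξ ⟨dd i, hddN i⟩ with hx0
    refine ⟨⟨π x0, hπmem x0⟩, ?_⟩
    ext l
    show pair (b l : ι →₀ ℤ) (π x0) = c l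
    have hkey : ∀ d : N, pair (d : ι →₀ ℤ) (π x0) = Ξ d := by
      intro d
      have h1 : pair (d : ι →₀ ℤ) (π x0) = pair (d : ι →₀ ℤ) x0 := (d.2 x0).symm
      have h2 : pair (d : ι →₀ ℤ) x0 = ∑ i ∈ (d : ι →₀ ℤ).support, (d : ι →₀ ℤ) i * x0 i :=
        pair_apply _ _
      have h3 : ∑ i ∈ (d : ι →₀ ℤ).support, (d : ι →₀ ℤ) i * x0 i
          = Ξ (∑ i ∈ (d : ι →₀ ℤ).support, (d : ι →₀ ℤ) i • (⟨dd i, hddN i⟩ : N)) := by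
        rw [map_sum]
        exact Finset.sum_congr rfl fun i _ => by rw [map_smul, smul_eq_mul]
      have h4 : (∑ i ∈ (d : ι →₀ ℤ).support, (d : ι →₀ ℤ) i • (⟨dd i, hddN i⟩ : N)) = d := by
        apply Subtype.ext
        have hco : ((∑ i ∈ (d : ι →₀ ℤ).support, (d : ι →₀ ℤ) i • (⟨dd i, hddN i⟩ : N) : N) : ι →₀ ℤ)
            = ∑ i ∈ (d : ι →₀ ℤ).support, (d : ι →₀ ℤ) i • dd i := by
          rw [AddSubmonoidClass.coe_finset_sum]
          exact Finset.sum_congr rfl fun i _ => rfl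
        rw [hco, hrep (d : ι →₀ ℤ) d.2]
      rw [h1, h2, h3, h4]
    rw [hkey (b l)]
    exact b.constr_basis ℤ c l
  set e : A' ≃ₗ[ℤ] (lam → ℤ) := LinearEquiv.ofBijective Θ ⟨hinj, hsurj⟩ with he
  exact ⟨lam, hcard, ⟨e.toAddEquiv⟩⟩
end

section
/- There is no class C of abelian groups such that for every abelian group G, G is cotorsionfree if and only if Ext(G, X) = 0 for every X ∈ C. That is, the class of cotorsionfree groups is never of the form ⊥C = {G : Ext(G, X) = 0 for all X ∈ C}. -/
/-- `Ext(G, X) = 0`: every short exact sequence `0 → X → E → G → 0` splits, i.e. every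
surjective homomorphism `π : E → G` whose kernel is isomorphic to `X` has a
homomorphic right inverse. -/
def ExtVanish (G : Type) [AddCommGroup G] (X : Type) [AddCommGroup X] : Prop :=
  ∀ (E : Type) [AddCommGroup E] (π : E →+ G), Function.Surjective π →
    Nonempty (π.ker ≃+ X) → ∃ s : G →+ E, π.comp s = AddMonoidHom.id G

/-!
As `ℚ` is not cotorsionfree, some `X ∈ C` is the kernel of a non-split surjection `π : E → ℚ`.
If `Ext(G, X) = 0` and `q : G → ℚ^(B)` is onto, every `G → ℚ` lifts through `π`. Lift
`(∑_{b ∈ S} coordinate b) ∘ q` for each `S ⊆ B`: if the lifts for `S ≠ T` agreed on `ker q`, their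
difference would factor through `q` and yield a splitting of `π`. Hence `2^|B| ≤ |E|^|ker q|`.

The tree group of `ι` is the subgroup of `ℤ^(List ι)` generated by the `y_{η,k}`, `η : ℕ → ι`,
where `y_{η,k}(η↾n) = n!/k!` for `n ≥ k` and `y_{η,k}` vanishes elsewhere. It embeds in a power
of `ℤ`, so it is cotorsionfree; `g ↦ (lim_n g(η↾n)/n!)_η` maps it onto `ℚ^(ℕ → ι)`, with kernel
inside the finitely supported functions, of cardinality `|ι|`. With `B = ℕ → ι` and
`|E| ≤ |ι| = κ`, `2^κ ≤ κ^ℵ₀`, this gives `2^|B| ≤ κ^κ = 2^κ ≤ κ^ℵ₀ = |B|`, a contradiction.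
-/

open Function Cardinal Filter
open scoped Nat

universe u

section Cotorsionfree

lemma AddMonoidHom.eq_zero_of_infinite_setOf_isUnit_natCast {R : Type*} [Ring R]
    (hR : {d : ℕ | IsUnit (d : R)}.Infinite) (f : R →+ ℤ) : f = 0 := by
  ext x
  obtain ⟨d, ⟨u, hu⟩, hd⟩ := hR.exists_gt (f x).natAbs
  have hx : d • ((u⁻¹ : Rˣ) * x) = x := by
    rw [nsmul_eq_mul, ← hu, ← mul_assoc, Units.mul_inv, one_mul]
  refine Int.eq_zero_of_dvd_of_natAbs_lt_natAbs (d := d) ⟨f ((u⁻¹ : Rˣ) * x), ?_⟩ hd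
  rw [← nsmul_eq_mul, ← map_nsmul, hx]

lemma Rat.infinite_setOf_isUnit_natCast : {d : ℕ | IsUnit (d : ℚ)}.Infinite :=
  Set.infinite_of_forall_exists_gt fun N =>
    ⟨N + 1, isUnit_iff_ne_zero.2 (Nat.cast_ne_zero.2 N.succ_ne_zero), N.lt_succ_self⟩

lemma ZMod.infinite_setOf_isUnit_natCast {p : ℕ} (hp : p ≠ 0) :
    {d : ℕ | IsUnit (d : ZMod p)}.Infinite :=
  Set.infinite_of_forall_exists_gt fun N =>
    ⟨p * N + 1, by simp, by nlinarith [Nat.pos_of_ne_zero hp]⟩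

lemma PadicInt.infinite_setOf_isUnit_natCast (p : ℕ) [Fact p.Prime] :
    {d : ℕ | IsUnit (d : ℤ_[p])}.Infinite :=
  Set.infinite_of_forall_exists_gt fun N =>
    ⟨p * N + 1, PadicInt.isUnit_iff.2 <| PadicInt.norm_natCast_eq_one_iff.2 <|
      (Nat.coprime_mul_left_add_right p 1 N).2 (Nat.coprime_one_right p),
      by nlinarith [(Fact.out : p.Prime).pos]⟩

variable {G ι : Type*} [AddCommGroup G] (j : G →+ (ι → ℤ)) (hj : Injective j)
include hj

lemma not_exists_addSubgroup_addEquiv_of_injective_pi_int {R : Type*} [Ring R] [Nontrivial R]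
    (hR : {d : ℕ | IsUnit (d : R)}.Infinite) : ¬ ∃ H : AddSubgroup G, Nonempty (H ≃+ R) := by
  rintro ⟨H, ⟨e⟩⟩
  refine one_ne_zero (e.symm.injective (Subtype.val_injective (hj (funext fun i => ?_))))
  have := DFunLike.congr_fun (AddMonoidHom.eq_zero_of_infinite_setOf_isUnit_natCast hR
    ((Pi.evalAddMonoidHom _ i).comp (j.comp (H.subtype.comp e.symm.toAddMonoidHom)))) 1
  simpa using this

lemma cotorsionfree_of_injective_pi_int : Cotorsionfree G :=
  ⟨not_exists_addSubgroup_addEquiv_of_injective_pi_int j hj Rat.infinite_setOf_isUnit_natCast,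
    fun _ hp => haveI := Fact.mk hp
      not_exists_addSubgroup_addEquiv_of_injective_pi_int j hj
        (ZMod.infinite_setOf_isUnit_natCast hp.ne_zero),
    fun p _ => not_exists_addSubgroup_addEquiv_of_injective_pi_int j hj
      (PadicInt.infinite_setOf_isUnit_natCast p)⟩

end Cotorsionfree

section Lifting

lemma ExtVanish.exists_lift {G X E Q : Type} [AddCommGroup G] [AddCommGroup X]
    [AddCommGroup E] [AddCommGroup Q] (hG : ExtVanish G X) {π : E →+ Q} (hπ : Surjective π)
    (e : π.ker ≃+ X) (f : G →+ Q) : ∃ h : G →+ E, π.comp h = f := by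
  let P := (f.comp (AddMonoidHom.fst G E)).eqLocus (π.comp (AddMonoidHom.snd G E))
  let p : P →+ G := (AddMonoidHom.fst G E).comp P.subtype
  have hp : Surjective p := fun g =>
    let ⟨x, hx⟩ := hπ (f g)
    ⟨⟨(g, x), hx.symm⟩, rfl⟩
  let kerEquiv : p.ker ≃+ π.ker :=
    { toFun := fun z => ⟨z.1.1.2, by
        have h : f z.1.1.1 = π z.1.1.2 := z.1.2
        rwa [show z.1.1.1 = 0 from z.2, map_zero, eq_comm] at h⟩
      invFun := fun x => ⟨⟨(0, x), show f 0 = π x by rw [map_zero, x.2]⟩, rfl⟩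
      left_inv := fun z => by ext; exacts [z.2.symm, rfl]
      right_inv := fun _ => rfl
      map_add' := fun _ _ => rfl }
  obtain ⟨s, hs⟩ := hG P p hp ⟨kerEquiv.trans e⟩
  refine ⟨(AddMonoidHom.snd G E).comp (P.subtype.comp s), AddMonoidHom.ext fun g => ?_⟩
  have h : f (s g : G × E).1 = π (s g : G × E).2 := (s g).2
  rw [show (s g : G × E).1 = g from DFunLike.congr_fun hs g] at h
  exact h.symm

variable {G E Q : Type*} [AddCommGroup G] [AddCommGroup E] [AddCommGroup Q]

lemma AddMonoidHom.exists_comp_eq_sub_of_eqOn_ker {V : Type*} [AddCommGroup V] {q : G →+ V}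
    (hq : Surjective q) (π : E →+ Q) {ν₁ ν₂ : V →+ Q} {h₁ h₂ : G →+ E}
    (hh₁ : π.comp h₁ = ν₁.comp q) (hh₂ : π.comp h₂ = ν₂.comp q)
    (heq : ∀ k ∈ q.ker, h₁ k = h₂ k) : ∃ d : V →+ E, π.comp d = ν₁ - ν₂ := by
  let d := q.liftOfSurjective hq ⟨h₁ - h₂, fun k hk => by simp [heq k hk]⟩
  refine ⟨d, (AddMonoidHom.cancel_right hq).1 ?_⟩
  rw [AddMonoidHom.comp_assoc, AddMonoidHom.liftOfRightInverse_comp, AddMonoidHom.sub_comp,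
    AddMonoidHom.comp_sub, hh₁, hh₂]

noncomputable def Finsupp.sumOn {B : Type*} (S : Set B) : (B →₀ Q) →+ Q :=
  Finsupp.liftAddHom (S.indicator fun _ => AddMonoidHom.id Q)

variable {B : Type*} {S T : Set B} {π : E →+ Q}

lemma Finsupp.sumOn_single_of_mem {b : B} (hb : b ∈ S) (r : Q) : sumOn S (single b r) = r := by
  simp [sumOn, hb]

lemma Finsupp.sumOn_single_of_notMem {b : B} (hb : b ∉ S) (r : Q) :
    sumOn S (single b r) = 0 := by
  simp [sumOn, hb]

lemma subset_of_lifts_eqOn_ker (hπ : ¬ ∃ s : Q →+ E, π.comp s = AddMonoidHom.id Q)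
    {q : G →+ (B →₀ Q)} (hq : Surjective q) {hS hT : G →+ E}
    (hhS : π.comp hS = (Finsupp.sumOn S).comp q) (hhT : π.comp hT = (Finsupp.sumOn T).comp q)
    (heq : ∀ k : q.ker, hS k = hT k) : S ⊆ T := by
  intro b hbS
  by_contra hbT
  obtain ⟨d, hd⟩ :=
    AddMonoidHom.exists_comp_eq_sub_of_eqOn_ker hq π hhS hhT fun k hk => heq ⟨k, hk⟩
  refine hπ ⟨d.comp (Finsupp.singleAddHom b), AddMonoidHom.ext fun r => ?_⟩
  have := DFunLike.congr_fun hd (Finsupp.single b r)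
  simp only [AddMonoidHom.comp_apply, AddMonoidHom.sub_apply] at this
  simp [this, Finsupp.sumOn_single_of_mem hbS, Finsupp.sumOn_single_of_notMem hbT]

end Lifting

theorem mk_set_le_of_forall_exists_lift {G E Q B : Type u} [AddCommGroup G] [AddCommGroup E]
    [AddCommGroup Q] {π : E →+ Q} (hπ : ¬ ∃ s : Q →+ E, π.comp s = AddMonoidHom.id Q)
    {q : G →+ (B →₀ Q)} (hq : Surjective q)
    (hlift : ∀ f : G →+ Q, ∃ h : G →+ E, π.comp h = f) : #(Set B) ≤ #(q.ker → E) := by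
  choose h hh using fun S : Set B => hlift ((Finsupp.sumOn S).comp q)
  refine mk_le_of_injective (f := fun S k => h S k) fun S T hST => ?_
  exact (subset_of_lifts_eqOn_ker hπ hq (hh S) (hh T) (congr_fun hST)).antisymm
    (subset_of_lifts_eqOn_ker hπ hq (hh T) (hh S) (congr_fun hST.symm))

section Tree

open scoped Classical

variable {ι : Type u}

def branchPrefix (η : ℕ → ι) (n : ℕ) : List ι := (List.range n).map η

@[simp] lemma length_branchPrefix (η : ℕ → ι) (n : ℕ) : (branchPrefix η n).length = n := by
  simp [branchPrefix]

lemma eventually_branchPrefix_ne {η η' : ℕ → ι} (h : η ≠ η') :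
    ∀ᶠ n in atTop, branchPrefix η n ≠ branchPrefix η' n := by
  obtain ⟨m, hm⟩ := Function.ne_iff.1 h
  filter_upwards [eventually_gt_atTop m] with n hn
  simp only [branchPrefix, ne_eq, List.map_inj_left, List.mem_range, not_forall]
  exact ⟨m, hn, hm⟩

noncomputable def branchVec (η : ℕ → ι) (k : ℕ) (τ : List ι) : ℤ :=
  if k ≤ τ.length ∧ τ = branchPrefix η τ.length then τ.length ! / k ! else 0

lemma eventually_branchVec_branchPrefix (η : ℕ → ι) (k : ℕ) (η' : ℕ → ι) :
    ∀ᶠ n in atTop,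
      (branchVec η k (branchPrefix η' n) : ℚ) = if η = η' then (n ! / k ! : ℚ) else 0 := by
  by_cases h : η = η'
  · subst h
    filter_upwards [eventually_ge_atTop k] with n hn
    simp [branchVec, hn,
      Int.cast_div_charZero (Int.natCast_dvd_natCast.2 (Nat.factorial_dvd_factorial hn))]
  · filter_upwards [eventually_branchPrefix_ne h] with n hn
    simp [branchVec, h, Ne.symm hn]

variable (ι) in
noncomputable def treeMap : ((ℕ → ι) × ℕ →₀ ℤ) →+ (List ι → ℤ) :=
  Finsupp.liftAddHom fun i => zmultiplesHom _ (branchVec i.1 i.2)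

variable (ι) in
noncomputable def branchLimit : ((ℕ → ι) × ℕ →₀ ℤ) →+ ((ℕ → ι) →₀ ℚ) :=
  Finsupp.liftAddHom fun i => zmultiplesHom _ (Finsupp.single i.1 (i.2 ! : ℚ)⁻¹)

lemma treeMap_apply (c : (ℕ → ι) × ℕ →₀ ℤ) (τ : List ι) :
    treeMap ι c τ = c.sum fun i a => a * branchVec i.1 i.2 τ := by
  simp [treeMap, Finsupp.sum]

lemma branchLimit_apply (c : (ℕ → ι) × ℕ →₀ ℤ) (η : ℕ → ι) :
    branchLimit ι c η = c.sum fun i a => a * if i.1 = η then (i.2 ! : ℚ)⁻¹ else 0 := by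
  simp +contextual [branchLimit, Finsupp.sum, Finsupp.finsetSum_apply, Finsupp.single_apply]

lemma eventually_treeMap_branchPrefix (c : (ℕ → ι) × ℕ →₀ ℤ) (η : ℕ → ι) :
    ∀ᶠ n in atTop, (treeMap ι c (branchPrefix η n) : ℚ) = n ! * branchLimit ι c η := by
  filter_upwards [(eventually_all_finset c.support).2 fun i _ =>
    eventually_branchVec_branchPrefix i.1 i.2 η] with n hn
  rw [treeMap_apply, branchLimit_apply, Finsupp.sum, Finsupp.sum, Int.cast_sum, Finset.mul_sum]
  refine Finset.sum_congr rfl fun i hi => ?_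
  push_cast
  rw [hn i hi]
  split_ifs <;> ring

lemma ker_treeMap_le_ker_branchLimit : (treeMap ι).ker ≤ (branchLimit ι).ker := by
  intro c hc
  ext η
  obtain ⟨n, hn⟩ := (eventually_treeMap_branchPrefix c η).exists
  rw [AddMonoidHom.mem_ker.1 hc] at hn
  simpa [Nat.factorial_ne_zero, eq_comm] using hn

lemma finite_support_treeMap {c : (ℕ → ι) × ℕ →₀ ℤ} (hc : branchLimit ι c = 0) :
    (support (treeMap ι c)).Finite := by
  have hev : ∀ η, ∀ᶠ n in atTop, treeMap ι c (branchPrefix η n) = 0 := fun η => by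
    filter_upwards [eventually_treeMap_branchPrefix c η] with n hn
    simpa [hc] using hn
  choose N hN using fun η => eventually_atTop.1 (hev η)
  refine ((c.support.finite_toSet.biUnion fun i _ =>
    (Set.finite_Iio (N i.1)).image (branchPrefix i.1))).subset fun τ hτ => ?_
  rw [Function.mem_support, treeMap_apply] at hτ
  obtain ⟨i, hi, hiτ⟩ := Finset.exists_ne_zero_of_sum_ne_zero hτ
  have hτ_eq : τ = branchPrefix i.1 τ.length := by
    by_contra h
    simp [branchVec, h] at hiτ
  refine Set.mem_biUnion hi
    ⟨τ.length, Set.mem_Iio.2 (lt_of_not_ge fun hle => hτ ?_), hτ_eq.symm⟩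
  have := hN i.1 τ.length hle
  rwa [← hτ_eq, treeMap_apply] at this

lemma Rat.exists_eq_intCast_mul_inv_factorial (r : ℚ) :
    ∃ (a : ℤ) (k : ℕ), (a : ℚ) * (k ! : ℚ)⁻¹ = r := by
  obtain ⟨m, hm⟩ := Nat.dvd_factorial r.pos le_rfl
  have hm0 : (m : ℚ) ≠ 0 :=
    Nat.cast_ne_zero.2 (right_ne_zero_of_mul (hm ▸ r.den.factorial_ne_zero))
  refine ⟨r.num * m, r.den, ?_⟩
  rw [← div_eq_mul_inv, hm]
  push_cast
  rw [mul_div_mul_right _ _ hm0, Rat.num_div_den]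

lemma branchLimit_surjective : Surjective (branchLimit ι) := by
  intro v
  induction v using Finsupp.induction with
  | zero => exact ⟨0, map_zero _⟩
  | single_add η r v _ _ ih =>
    obtain ⟨c, rfl⟩ := ih
    obtain ⟨a, k, rfl⟩ := Rat.exists_eq_intCast_mul_inv_factorial r
    exact ⟨Finsupp.single (η, k) a + c, by simp [branchLimit, Finsupp.smul_single]⟩

variable (ι) in
/-- The subgroup of `ℤ^(List ι)` generated by the `branchVec η k`, presented as the coimage of
`treeMap ι`. -/
abbrev TreeGroup := ((ℕ → ι) × ℕ →₀ ℤ) ⧸ (treeMap ι).ker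

variable (ι) in
noncomputable def TreeGroup.branchLimit : TreeGroup ι →+ ((ℕ → ι) →₀ ℚ) :=
  QuotientAddGroup.lift _ (_root_.branchLimit ι) ker_treeMap_le_ker_branchLimit

namespace TreeGroup

lemma branchLimit_surjective : Surjective (TreeGroup.branchLimit ι) :=
  QuotientAddGroup.lift_surjective_of_surjective _ _ _root_.branchLimit_surjective _

lemma cotorsionfree : Cotorsionfree (TreeGroup ι) :=
  cotorsionfree_of_injective_pi_int _ (QuotientAddGroup.kerLift_injective (treeMap ι))

lemma finite_support_of_mem_ker_branchLimit {g : TreeGroup ι}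
    (hg : g ∈ (TreeGroup.branchLimit ι).ker) :
    (support (QuotientAddGroup.kerLift (treeMap ι) g)).Finite := by
  obtain ⟨c, rfl⟩ := QuotientAddGroup.mk_surjective g
  exact finite_support_treeMap hg

lemma mk_ker_branchLimit_le [Infinite ι] : #(TreeGroup.branchLimit ι).ker ≤ #ι := by
  let j (g : (TreeGroup.branchLimit ι).ker) : List ι →₀ ℤ :=
    Finsupp.ofSupportFinite _ (finite_support_of_mem_ker_branchLimit g.2)
  have hj : Injective j := fun g g' h => Subtype.ext <|
    QuotientAddGroup.kerLift_injective _ (congrArg DFunLike.coe h)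
  calc #(TreeGroup.branchLimit ι).ker ≤ #(List ι →₀ ℤ) := mk_le_of_injective hj
    _ = #ι := by simp [mk_list_eq_mk]

lemma mk_ker_branchLimit_arrow_lt {E : Type u} [Infinite ι] (hE : #E ≤ #ι)
    (hι : 2 ^ #ι ≤ #ι ^ ℵ₀) : #((TreeGroup.branchLimit ι).ker → E) < #(Set (ℕ → ι)) :=
  calc #((TreeGroup.branchLimit ι).ker → E)
      = #E ^ #(TreeGroup.branchLimit ι).ker := (power_def _ _).symm
    _ ≤ #ι ^ #ι := (power_le_power_right hE).trans
        (power_le_power_left (mk_ne_zero ι) mk_ker_branchLimit_le)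
    _ = 2 ^ #ι := power_self_eq (aleph0_le_mk ι)
    _ ≤ #ι ^ ℵ₀ := hι
    _ = #(ℕ → ι) := by simp
    _ < #(Set (ℕ → ι)) := mk_set ▸ cantor _

end TreeGroup

end Tree

lemma Cardinal.exists_infinite_two_power_le_power_aleph0 (c : Cardinal.{u}) :
    ∃ ι : Type u, Infinite ι ∧ c ≤ #ι ∧ 2 ^ #ι ≤ #ι ^ ℵ₀ := by
  let ks : ℕ → Cardinal.{u} := fun n => n.rec (max c ℵ₀) fun _ k => 2 ^ k
  let κ := Cardinal.sum ks
  have hκ : max c ℵ₀ ≤ κ := le_sum ks 0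
  refine ⟨κ.out, infinite_iff.2 (by simpa using le_of_max_le_right hκ),
    by simpa using le_of_max_le_left hκ, ?_⟩
  rw [mk_out]
  calc (2 : Cardinal.{u}) ^ κ = prod fun n => 2 ^ ks n := power_sum 2 ks
    _ ≤ prod fun _ : ℕ => κ := prod_le_prod _ _ fun n => le_sum ks (n + 1)
    _ = κ ^ ℵ₀ := by simp

/-- the class of cotorsionfree groups is never of the form
`⊥C = {G : Ext(G, X) = 0 for all X ∈ C}` for a class `C` of abelian groups. -/
theorem statement9 :
    ¬ ∃ C : AddCommGrpCat.{0} → Prop,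
      ∀ (G : Type) [AddCommGroup G],
        (Cotorsionfree G ↔ ∀ X : AddCommGrpCat.{0}, C X → ExtVanish G X) := by
  rintro ⟨C, hC⟩
  obtain ⟨X, hXC, hX⟩ : ∃ X : AddCommGrpCat, C X ∧ ¬ ExtVanish ℚ X := by
    by_contra! h
    exact ((hC ℚ).2 h).1 ⟨⊤, ⟨AddSubgroup.topEquiv⟩⟩
  simp only [ExtVanish, not_forall] at hX
  obtain ⟨E, _, π, hπ, ⟨e⟩, hns⟩ := hX
  obtain ⟨ι, _, hEι, hι⟩ := exists_infinite_two_power_le_power_aleph0 #E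
  have hG : ExtVanish (TreeGroup ι) X := (hC _).1 TreeGroup.cotorsionfree X hXC
  exact (mk_set_le_of_forall_exists_lift hns TreeGroup.branchLimit_surjective
    (hG.exists_lift hπ e)).not_gt (TreeGroup.mk_ker_branchLimit_arrow_lt hEι hι)
end
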